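/- arXiv:2103.13071 — 6 statements merged into one kernel-verified Lean document; each statement's English description precedes it below -/
import Mathlib

section
/- Let H be a separable complex Hilbert space and let A : ℝ → B(H) be continuous in the operator norm with sup_{ξ∈ℝ} ‖A(ξ)‖ < ∞, and let T be the induced bounded operator on L²(ℝ; H), (Tf)(ξ) = A(ξ)(f(ξ)). Then for every λ ∈ ℂ the operator T − λI is invertible in the algebra of bounded operators on L²(ℝ; H) if and only if A(ξ) − λI is invertible in B(H) for every ξ ∈ ℝ and M := sup_{ξ∈ℝ} ‖(A(ξ) − λI)⁻¹‖ < ∞; moreover, in that case ‖(T − λI)⁻¹‖ ≤ M. -/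
/-! Let `T` act on `Lp` as multiplication by a continuous family `B`. If `‖f‖ ≤ K ‖T f‖`, testing
this on `1_s • v` for sets `s` of positive measure shrinking to `x` gives `‖v‖ ≤ K ‖B x v‖`. If `T`
is moreover onto, solving `T g = 1_s • w` puts `w` in the range of `B y` for points `y` arbitrarily
close to `x`, with preimages of norm at most `K ‖w‖`; hence `w` is a limit of points of the range
of `B x`, which is closed because `B x` is bounded below. Conversely, a uniformly bounded
continuous family of inverses is itself a multiplication operator, and it inverts `T`. -/

open MeasureTheory Filter Topology Set
open scoped ENNReal NNReal

section MulOperator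

variable {α 𝕜 E F : Type*} [MeasurableSpace α] {μ : Measure α} {p : ℝ≥0∞}
  [NontriviallyNormedField 𝕜] [NormedAddCommGroup E] [NormedSpace 𝕜 E]
  [NormedAddCommGroup F] [NormedSpace 𝕜 F]

theorem memLp_apply_of_norm_le {B : α → E →L[𝕜] F} (hB : AEStronglyMeasurable B μ) {M : ℝ}
    (hM : ∀ x, ‖B x‖ ≤ M) (f : Lp E p μ) : MemLp (fun x => B x (f x)) p μ :=
  (Lp.memLp f).of_le_mul
    ((ContinuousLinearMap.id 𝕜 (E →L[𝕜] F)).aestronglyMeasurable_comp₂ hB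
      (Lp.aestronglyMeasurable f))
    (.of_forall fun x => (B x).le_of_opNorm_le (hM x) _)

variable [Fact (1 ≤ p)]

def IsMulOperator (T : Lp E p μ →L[𝕜] Lp F p μ) (B : α → E →L[𝕜] F) : Prop :=
  ∀ f : Lp E p μ, (T f : α → F) =ᵐ[μ] fun x => B x (f x)

namespace IsMulOperator

variable {T S : Lp E p μ →L[𝕜] Lp F p μ} {B C : α → E →L[𝕜] F}

theorem unique (hT : IsMulOperator T B) (hS : IsMulOperator S B) : T = S :=
  ContinuousLinearMap.ext fun f => Lp.ext <| (hT f).trans (hS f).symm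

theorem sub (hT : IsMulOperator T B) (hS : IsMulOperator S C) :
    IsMulOperator (T - S) fun x => B x - C x := fun f => by
  filter_upwards [Lp.coeFn_sub (T f) (S f), hT f, hS f] with x hsub hTx hSx
  rw [sub_apply, hsub, Pi.sub_apply, hTx, hSx, sub_apply]

theorem const_smul (hT : IsMulOperator T B) (c : 𝕜) :
    IsMulOperator (c • T) fun x => c • B x := fun f => by
  filter_upwards [Lp.coeFn_smul c (T f), hT f] with x hsmul hTx
  rw [smul_apply, hsmul, Pi.smul_apply, hTx, smul_apply]

theorem mul {T S : Lp E p μ →L[𝕜] Lp E p μ} {B C : α → E →L[𝕜] E}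
    (hT : IsMulOperator T B) (hS : IsMulOperator S C) :
    IsMulOperator (T * S) fun x => B x * C x := fun f => by
  filter_upwards [hT (S f), hS f] with x hTx hSx
  rw [mul_apply_eq_comp, hTx, hSx, mul_apply_eq_comp]

end IsMulOperator

theorem isMulOperator_one : IsMulOperator (1 : Lp E p μ →L[𝕜] Lp E p μ) fun _ => 1 :=
  fun _ => .of_forall fun _ => rfl

variable {B : α → E →L[𝕜] F} (hB : AEStronglyMeasurable B μ) {M : ℝ} (hM : ∀ x, ‖B x‖ ≤ M)

noncomputable def mulOperator : Lp E p μ →L[𝕜] Lp F p μ :=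
  LinearMap.mkContinuous
    { toFun f := (memLp_apply_of_norm_le hB hM f).toLp
      map_add' f g := by
        refine Lp.ext ?_
        filter_upwards [MemLp.coeFn_toLp (memLp_apply_of_norm_le hB hM (f + g)),
          Lp.coeFn_add (memLp_apply_of_norm_le hB hM f).toLp (memLp_apply_of_norm_le hB hM g).toLp,
          MemLp.coeFn_toLp (memLp_apply_of_norm_le hB hM f),
          MemLp.coeFn_toLp (memLp_apply_of_norm_le hB hM g), Lp.coeFn_add f g]
          with x hfg hadd hf hg hadd'
        rw [hfg, hadd, Pi.add_apply, hf, hg, hadd', Pi.add_apply, map_add]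
      map_smul' c f := by
        refine Lp.ext ?_
        filter_upwards [MemLp.coeFn_toLp (memLp_apply_of_norm_le hB hM (c • f)),
          Lp.coeFn_smul c (memLp_apply_of_norm_le hB hM f).toLp,
          MemLp.coeFn_toLp (memLp_apply_of_norm_le hB hM f), Lp.coeFn_smul c f]
          with x hcf hsmul hf hsmul'
        rw [hcf, RingHom.id_apply, hsmul, Pi.smul_apply, hf, hsmul', Pi.smul_apply, map_smul] }
    M fun f => Lp.norm_le_mul_norm_of_ae_le_mul <| by
      filter_upwards [MemLp.coeFn_toLp (memLp_apply_of_norm_le hB hM f)] with x hx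
      exact hx ▸ (B x).le_of_opNorm_le (hM x) _

theorem isMulOperator_mulOperator : IsMulOperator (mulOperator (p := p) hB hM) B := fun f =>
  MemLp.coeFn_toLp (memLp_apply_of_norm_le hB hM f)

theorem norm_mulOperator_le (hM₀ : 0 ≤ M) : ‖mulOperator (p := p) hB hM‖ ≤ M :=
  LinearMap.mkContinuous_norm_le _ hM₀ _

end MulOperator

namespace ContinuousLinearMap

variable {X 𝕜 E F : Type*} [TopologicalSpace X] [NontriviallyNormedField 𝕜]
  [NormedAddCommGroup E] [NormedSpace 𝕜 E] [NormedAddCommGroup F] [NormedSpace 𝕜 F]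

theorem norm_le_nnnorm_inverse_mul_norm_apply {T : E →L[𝕜] E} (hu : IsUnit T) (u : E) :
    ‖u‖ ≤ ‖Ring.inverse T‖₊ * ‖T u‖ :=
  calc ‖u‖ = ‖Ring.inverse T (T u)‖ := by
        rw [← mul_apply_eq_comp, Ring.inverse_mul_cancel _ hu, one_apply_eq_self]
    _ ≤ ‖Ring.inverse T‖ * ‖T u‖ := le_opNorm _ _

variable [CompleteSpace E]

theorem isUnit_and_norm_inverse_le {T : E →L[𝕜] E} {K : ℝ≥0} (hK : ∀ u, ‖u‖ ≤ K * ‖T u‖)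
    (hT : Function.Surjective T) : IsUnit T ∧ ‖Ring.inverse T‖ ≤ K := by
  have hu : IsUnit T := isUnit_iff_bijective.2 ⟨(T.antilipschitz_of_bound hK).injective, hT⟩
  refine ⟨hu, opNorm_le_bound _ K.2 fun w => ?_⟩
  simpa only [← mul_apply_eq_comp, Ring.mul_inverse_cancel _ hu, one_apply_eq_self]
    using hK (Ring.inverse T w)

theorem mem_range_of_frequently_mem_range {B : X → E →L[𝕜] F} {x : X} (hB : ContinuousAt B x)
    {K : ℝ≥0} (hK : ∀ y u, ‖u‖ ≤ K * ‖B y u‖) {w : F}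
    (hw : ∃ᶠ y in 𝓝 x, w ∈ range (B y)) : w ∈ range (B x) := by
  refine (((B x).antilipschitz_of_bound (hK x)).isClosed_range
    (B x).uniformContinuous).closure_subset (Metric.mem_closure_iff.2 fun ε hε => ?_)
  have hsmall : ∀ᶠ y in 𝓝 x, ‖B y - B x‖ * (K * ‖w‖) < ε := by
    have : Tendsto (fun y => ‖B y - B x‖ * (K * ‖w‖)) (𝓝 x) (𝓝 0) := by
      simpa using (tendsto_iff_norm_sub_tendsto_zero.1 hB).mul_const (K * ‖w‖ : ℝ)
    exact this.eventually (gt_mem_nhds hε)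
  obtain ⟨y, ⟨u, rfl⟩, hy⟩ := (hw.and_eventually hsmall).exists
  refine ⟨B x u, mem_range_self u, ?_⟩
  calc dist (B y u) (B x u) = ‖(B y - B x) u‖ := by rw [dist_eq_norm, sub_apply]
    _ ≤ ‖B y - B x‖ * ‖u‖ := le_opNorm _ _
    _ ≤ ‖B y - B x‖ * (K * ‖B y u‖) := by gcongr; exact hK y u
    _ < ε := hy

end ContinuousLinearMap

section Fibers

variable {X 𝕜 E : Type*} [TopologicalSpace X] [MeasurableSpace X] [OpensMeasurableSpace X]
  {μ : Measure X} [NontriviallyNormedField 𝕜] [NormedAddCommGroup E] [NormedSpace 𝕜 E]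
  {p : ℝ≥0∞} [Fact (1 ≤ p)]

theorem MeasureTheory.Measure.exists_measurableSet_subset_measure_ne_zero_ne_top
    [μ.IsOpenPosMeasure] [IsLocallyFiniteMeasure μ] {x : X} {U : Set X} (hU : U ∈ 𝓝 x) :
    ∃ s ⊆ U, MeasurableSet s ∧ μ s ≠ 0 ∧ μ s ≠ ∞ := by
  obtain ⟨o, hxo, ho, hμo⟩ := μ.exists_isOpen_measure_lt_top x
  refine ⟨interior U ∩ o, inter_subset_left.trans interior_subset,
    (isOpen_interior.inter ho).measurableSet,
    (isOpen_interior.inter ho).measure_ne_zero μ ⟨x, mem_interior_iff_mem_nhds.2 hU, hxo⟩,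
    (measure_mono inter_subset_right).trans_lt hμo |>.ne⟩

namespace IsMulOperator

variable {T : Lp E p μ →L[𝕜] Lp E p μ} {B : X → E →L[𝕜] E}

section Forward

variable [μ.IsOpenPosMeasure] [IsLocallyFiniteMeasure μ]

theorem norm_le_mul_of_eventually_norm_apply_le (hT : IsMulOperator T B) {K : ℝ≥0}
    (hK : ∀ f, ‖f‖ ≤ K * ‖T f‖) {x : X} {v : E} {c : ℝ} (hc : ∀ᶠ y in 𝓝 x, ‖B y v‖ ≤ c) :
    ‖v‖ ≤ K * c := by
  have hc₀ : 0 ≤ c := (norm_nonneg _).trans hc.exists.choose_spec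
  obtain ⟨s, hsc, hs, hμs₀, hμs⟩ := μ.exists_measurableSet_subset_measure_ne_zero_ne_top hc
  have hp : p ≠ 0 := (zero_lt_one.trans_le Fact.out).ne'
  have hpos : 0 < μ.real s ^ (1 / p.toReal) :=
    Real.rpow_pos_of_pos (ENNReal.toReal_pos hμs₀ hμs) _
  have hle : ‖T (indicatorConstLp p hs hμs v)‖ ≤ ‖indicatorConstLp p hs hμs c‖ := by
    refine Lp.norm_le_norm_of_ae_le ?_
    filter_upwards [hT (indicatorConstLp p hs hμs v), indicatorConstLp_coeFn (c := v),
      indicatorConstLp_coeFn (c := c)] with y hTy hv hcy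
    rw [hTy, hv, hcy]
    by_cases hy : y ∈ s
    · simpa [hy, Real.norm_of_nonneg hc₀] using hsc hy
    · simp [hy]
  refine le_of_mul_le_mul_right ?_ hpos
  calc ‖v‖ * μ.real s ^ (1 / p.toReal) = ‖indicatorConstLp p hs hμs v‖ :=
        (norm_indicatorConstLp' hp hμs₀).symm
    _ ≤ K * ‖T (indicatorConstLp p hs hμs v)‖ := hK _
    _ ≤ K * ‖indicatorConstLp p hs hμs c‖ := by gcongr
    _ = K * c * μ.real s ^ (1 / p.toReal) := by
        rw [norm_indicatorConstLp' hp hμs₀, Real.norm_of_nonneg hc₀, mul_assoc]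

theorem norm_le_mul_norm_apply (hT : IsMulOperator T B) {K : ℝ≥0}
    (hK : ∀ f, ‖f‖ ≤ K * ‖T f‖) {x : X} {v : E} (hB : ContinuousAt (fun y => B y v) x) :
    ‖v‖ ≤ K * ‖B x v‖ := by
  refine ge_of_tendsto (((continuous_const_mul (K : ℝ)).tendsto _).mono_left
    (nhdsWithin_le_nhds (s := Ioi ‖B x v‖))) ?_
  filter_upwards [self_mem_nhdsWithin] with c hc
  exact hT.norm_le_mul_of_eventually_norm_apply_le hK
    (hB.norm.eventually (eventually_le_nhds hc))

theorem frequently_mem_range (hT : IsMulOperator T B) (hsurj : Function.Surjective T) (x : X)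
    (w : E) : ∃ᶠ y in 𝓝 x, w ∈ range (B y) := by
  refine frequently_iff.2 fun hU => ?_
  obtain ⟨s, hsU, hs, hμs₀, hμs⟩ := μ.exists_measurableSet_subset_measure_ne_zero_ne_top hU
  obtain ⟨g, hg⟩ := hsurj (indicatorConstLp p hs hμs w)
  have hae : ∀ᵐ y ∂μ.restrict s, y ∈ s ∧ B y (g y) = w := by
    filter_upwards [ae_restrict_mem hs, ae_restrict_of_ae (hT g),
      ae_restrict_of_ae (indicatorConstLp_coeFn (hs := hs) (hμs := hμs) (c := w))]
      with y hys hTy hw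
    rw [← hTy, hg, hw, indicator_of_mem hys]
    exact ⟨hys, rfl⟩
  have : (ae (μ.restrict s)).NeBot := ae_restrict_neBot.2 hμs₀
  obtain ⟨y, hys, hy⟩ := hae.exists
  exact ⟨y, hsU hys, g y, hy⟩

theorem isUnit_apply_of_isUnit [CompleteSpace E] (hT : IsMulOperator T B) (hB : Continuous B)
    (hu : IsUnit T) (x : X) : IsUnit (B x) ∧ ‖Ring.inverse (B x)‖ ≤ ‖Ring.inverse T‖ := by
  have hK := ContinuousLinearMap.norm_le_nnnorm_inverse_mul_norm_apply hu
  have hfiber (y : X) (u : E) : ‖u‖ ≤ ‖Ring.inverse T‖₊ * ‖B y u‖ :=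
    hT.norm_le_mul_norm_apply hK (hB.clm_apply continuous_const).continuousAt
  have hsurj : Function.Surjective T := (ContinuousLinearMap.isUnit_iff_bijective.1 hu).2
  exact ContinuousLinearMap.isUnit_and_norm_inverse_le (hfiber x) fun w =>
    ContinuousLinearMap.mem_range_of_frequently_mem_range hB.continuousAt hfiber
      (hT.frequently_mem_range hsurj x w)

end Forward

theorem isUnit_of_forall_isUnit_apply [SecondCountableTopology X] [CompleteSpace E]
    (hT : IsMulOperator T B) (hB : Continuous B) (hu : ∀ x, IsUnit (B x)) {M : ℝ} (hM₀ : 0 ≤ M)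
    (hM : ∀ x, ‖Ring.inverse (B x)‖ ≤ M) : IsUnit T ∧ ‖Ring.inverse T‖ ≤ M := by
  have hinv : Continuous fun x => Ring.inverse (B x) := continuous_iff_continuousAt.2 fun x =>
    ((hu x).unit_spec ▸ NormedRing.inverse_continuousAt (hu x).unit).comp hB.continuousAt
  set S := mulOperator (μ := μ) (p := p) hinv.aestronglyMeasurable hM
  have hS : IsMulOperator S fun x => Ring.inverse (B x) := isMulOperator_mulOperator _ _
  have hTS : T * S = 1 := by
    refine IsMulOperator.unique ?_ isMulOperator_one
    simpa only [Ring.mul_inverse_cancel _ (hu _)] using hT.mul hS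
  have hST : S * T = 1 := by
    refine IsMulOperator.unique ?_ isMulOperator_one
    simpa only [Ring.inverse_mul_cancel _ (hu _)] using hS.mul hT
  refine ⟨⟨⟨T, S, hTS, hST⟩, rfl⟩, ?_⟩
  rw [← Units.val_mk T S hTS hST, Ring.inverse_unit]
  exact norm_mulOperator_le hinv.aestronglyMeasurable hM hM₀

end IsMulOperator

end Fibers

theorem stmt_1_general {H : Type*} [NormedAddCommGroup H] [InnerProductSpace ℂ H]
    [CompleteSpace H]
    (A : ℝ → H →L[ℂ] H) (hcont : Continuous A)
    (T : Lp H 2 (volume : Measure ℝ) →L[ℂ] Lp H 2 (volume : Measure ℝ))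
    (hT : ∀ f : Lp H 2 (volume : Measure ℝ),
      (T f : ℝ → H) =ᵐ[volume] fun ξ : ℝ => A ξ (f ξ))
    (lam : ℂ) :
    (IsUnit (T - lam • 1) ↔
      ((∀ ξ : ℝ, IsUnit (A ξ - lam • 1)) ∧
        BddAbove (Set.range fun ξ : ℝ => ‖Ring.inverse (A ξ - lam • 1)‖))) ∧
    (IsUnit (T - lam • 1) →
      ‖Ring.inverse (T - lam • 1)‖ ≤ ⨆ ξ : ℝ, ‖Ring.inverse (A ξ - lam • 1)‖) := by
  have hTlam : IsMulOperator (T - lam • 1) fun ξ => A ξ - lam • 1 :=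
    IsMulOperator.sub hT (isMulOperator_one.const_smul lam)
  have hAlam : Continuous fun ξ => A ξ - lam • 1 := hcont.sub continuous_const
  have fwd := hTlam.isUnit_apply_of_isUnit hAlam
  have bwd (hu : ∀ ξ, IsUnit (A ξ - lam • 1))
      (hbdd : BddAbove (range fun ξ => ‖Ring.inverse (A ξ - lam • 1)‖)) :=
    hTlam.isUnit_of_forall_isUnit_apply hAlam hu (Real.iSup_nonneg fun _ => norm_nonneg _)
      (le_ciSup hbdd)
  have bdd (hu : IsUnit (T - lam • 1)) :
      BddAbove (range fun ξ => ‖Ring.inverse (A ξ - lam • 1)‖) :=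
    ⟨_, forall_mem_range.2 fun ξ => (fwd hu ξ).2⟩
  exact ⟨⟨fun hu => ⟨fun ξ => (fwd hu ξ).1, bdd hu⟩, fun h => (bwd h.1 h.2).1⟩,
    fun hu => (bwd (fun ξ => (fwd hu ξ).1) (bdd hu)).2⟩

/-- Let `H` be a separable complex Hilbert space, `A : ℝ → B(H)` norm
continuous with `sup_ξ ‖A ξ‖ < ∞`, and `T` the induced bounded operator on `L²(ℝ; H)`,
`(T f)(ξ) = A ξ (f ξ)`. Then for every `λ ∈ ℂ`, `T - λI` is invertible in the bounded
operators on `L²(ℝ; H)` iff `A ξ - λI` is invertible for every `ξ` and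
`M := sup_ξ ‖(A ξ - λI)⁻¹‖ < ∞`; moreover in that case `‖(T - λI)⁻¹‖ ≤ M`. -/
theorem stmt_1 {H : Type*} [NormedAddCommGroup H] [InnerProductSpace ℂ H]
    [CompleteSpace H] [SecondCountableTopology H]
    (A : ℝ → H →L[ℂ] H) (hcont : Continuous A)
    (C : ℝ) (hC : ∀ ξ : ℝ, ‖A ξ‖ ≤ C)
    (T : Lp H 2 (volume : Measure ℝ) →L[ℂ] Lp H 2 (volume : Measure ℝ))
    (hT : ∀ f : Lp H 2 (volume : Measure ℝ),
      (T f : ℝ → H) =ᵐ[volume] fun ξ : ℝ => A ξ (f ξ))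
    (lam : ℂ) :
    (IsUnit (T - lam • 1) ↔
      ((∀ ξ : ℝ, IsUnit (A ξ - lam • 1)) ∧
        BddAbove (Set.range fun ξ : ℝ => ‖Ring.inverse (A ξ - lam • 1)‖))) ∧
    (IsUnit (T - lam • 1) →
      ‖Ring.inverse (T - lam • 1)‖ ≤ ⨆ ξ : ℝ, ‖Ring.inverse (A ξ - lam • 1)‖) :=
  stmt_1_general A hcont T hT lam
end

section
/- For every z ∈ ℂ with 1 < Re z < 2 there exists a constant C > 0 (depending only on z) such that for every a ∈ [−1, 1) the function t ↦ t^{z−1} (t² − 2at + 1)^{−1/2} · t^{−1} is absolutely integrable on (0, ∞) and |∫₀^∞ t^{z−1} (t² − 2at + 1)^{−1/2} dt/t + log((1−a)/2)| ≤ C. -/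
/-!
Write `q(t) = t² - 2at + 1 = (t - 1)² + 2t(1 - a)`. Since `q(t) ≥ (t - 1)²`, the kernel
`K = q^{-1/2}` satisfies `|t - 1| K(t) ≤ 1` uniformly in `a`, so the integrand `t^{z-2} K(t)` is
bounded by `2 t^{Re z - 2}` on `(0, 1/2]` and by `3 t^{Re z - 3}` on `(3/2, ∞)`. On `[1/2, 3/2]`,
`|t^{z-2} - 1| ≤ 4 |z - 2| |t - 1|` makes `t^{z-2} K` and `K` differ by at most `4 |z - 2|`, while
`K` has the primitive `log (t - a + √q(t))`: its increment over `[1/2, 3/2]` is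
`-log ((1 - a) / 2) + O(1)`, because `3/2 - a + √q(3/2) ∈ [1, 5]` and `1/2 - a + √q(1/2)` lies
between `3 (1 - a) / 2` and `2 (1 - a)`.
-/

open MeasureTheory Real Set

section RpowBounds

variable {F : ℝ → ℂ} {b c p : ℝ}

lemma integrableOn_Ioc_zero_of_norm_le_rpow (hp : -1 < p) (hF : ContinuousOn F (Ioc 0 b))
    (hbound : ∀ t ∈ Ioc 0 b, ‖F t‖ ≤ c * t ^ p) : IntegrableOn F (Ioc 0 b) := by
  rcases le_or_gt b 0 with hb | hb
  · simp [Ioc_eq_empty_of_le hb]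
  have hg : IntegrableOn (fun t ↦ c * t ^ p) (Ioc 0 b) :=
    ((intervalIntegrable_iff_integrableOn_Ioc_of_le hb.le).1
      (intervalIntegral.intervalIntegrable_rpow' hp)).const_mul c
  exact hg.mono' (hF.aestronglyMeasurable measurableSet_Ioc)
    ((ae_restrict_iff' measurableSet_Ioc).2 (ae_of_all _ hbound))

lemma norm_setIntegral_Ioc_zero_le_of_norm_le_rpow (hp : -1 < p) (hb : 0 ≤ b)
    (hbound : ∀ t ∈ Ioc 0 b, ‖F t‖ ≤ c * t ^ p) :
    ‖∫ t in Ioc 0 b, F t‖ ≤ c * (b ^ (p + 1) / (p + 1)) := by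
  have hg : IntegrableOn (fun t ↦ c * t ^ p) (Ioc 0 b) :=
    ((intervalIntegrable_iff_integrableOn_Ioc_of_le hb).1
      (intervalIntegral.intervalIntegrable_rpow' hp)).const_mul c
  calc ‖∫ t in Ioc 0 b, F t‖ ≤ ∫ t in Ioc 0 b, c * t ^ p :=
        norm_integral_le_of_norm_le hg
          ((ae_restrict_iff' measurableSet_Ioc).2 (ae_of_all _ hbound))
    _ = c * (b ^ (p + 1) / (p + 1)) := by
        rw [← intervalIntegral.integral_of_le hb, intervalIntegral.integral_const_mul,
          integral_rpow (Or.inl hp), zero_rpow (by linarith), sub_zero]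

lemma integrableOn_Ioi_of_norm_le_rpow (hp : p < -1) (hb : 0 < b) (hF : ContinuousOn F (Ioi b))
    (hbound : ∀ t ∈ Ioi b, ‖F t‖ ≤ c * t ^ p) : IntegrableOn F (Ioi b) :=
  ((integrableOn_Ioi_rpow_of_lt hp hb).const_mul c).mono'
    (hF.aestronglyMeasurable measurableSet_Ioi)
    ((ae_restrict_iff' measurableSet_Ioi).2 (ae_of_all _ hbound))

lemma norm_setIntegral_Ioi_le_of_norm_le_rpow (hp : p < -1) (hb : 0 < b)
    (hbound : ∀ t ∈ Ioi b, ‖F t‖ ≤ c * t ^ p) :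
    ‖∫ t in Ioi b, F t‖ ≤ c * (b ^ (p + 1) / -(p + 1)) := by
  calc ‖∫ t in Ioi b, F t‖ ≤ ∫ t in Ioi b, c * t ^ p :=
        norm_integral_le_of_norm_le ((integrableOn_Ioi_rpow_of_lt hp hb).const_mul c)
          ((ae_restrict_iff' measurableSet_Ioi).2 (ae_of_all _ hbound))
    _ = c * (b ^ (p + 1) / -(p + 1)) := by
        rw [integral_const_mul, integral_Ioi_rpow_of_lt hp hb, neg_div, div_neg]

end RpowBounds

lemma norm_ofReal_cpow_sub_one_le {w : ℂ} (hw₁ : -1 ≤ w.re) (hw₂ : w.re ≤ 1) {t : ℝ}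
    (ht : t ∈ Icc (1 / 2 : ℝ) (3 / 2)) : ‖(t : ℂ) ^ w - 1‖ ≤ 4 * ‖w‖ * |t - 1| := by
  rcases eq_or_ne w 0 with rfl | hw
  · simp
  have hderiv : ∀ x ∈ Icc (1 / 2 : ℝ) (3 / 2),
      HasDerivWithinAt (fun y : ℝ ↦ (y : ℂ) ^ w) (w * (x : ℂ) ^ (w - 1)) (Icc (1 / 2) (3 / 2)) x :=
    fun x hx ↦ (hasDerivAt_ofReal_cpow_const (by linarith [hx.1]) hw).hasDerivWithinAt
  have hbound : ∀ x ∈ Icc (1 / 2 : ℝ) (3 / 2), ‖w * (x : ℂ) ^ (w - 1)‖ ≤ 4 * ‖w‖ := by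
    intro x hx
    have hx₀ : 0 < x := by linarith [hx.1]
    rw [norm_mul, Complex.norm_cpow_eq_rpow_re_of_pos hx₀, Complex.sub_re, Complex.one_re,
      mul_comm]
    gcongr
    calc x ^ (w.re - 1) ≤ (1 / 2) ^ (w.re - 1) :=
          rpow_le_rpow_of_nonpos (by norm_num) hx.1 (by linarith)
      _ = 2 ^ (1 - w.re) := by
          rw [one_div, inv_rpow zero_le_two, ← rpow_neg zero_le_two, neg_sub]
      _ ≤ 2 ^ (2 : ℝ) := rpow_le_rpow_of_exponent_le one_le_two (by linarith)
      _ = 4 := by norm_num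
  simpa [Real.norm_eq_abs] using
    (convex_Icc _ _).norm_image_sub_le_of_norm_hasDerivWithin_le hderiv hbound
      (show (1 : ℝ) ∈ Icc (1 / 2) (3 / 2) by norm_num) ht

-- the generating function of the Legendre polynomials
noncomputable def legendreKernel (a t : ℝ) : ℝ := (t ^ 2 - 2 * a * t + 1) ^ (-(1 : ℝ) / 2)

section LegendreKernel

variable {a t : ℝ}

lemma sq_sub_one_le_quadratic (ha : a ≤ 1) (ht : 0 ≤ t) : (t - 1) ^ 2 ≤ t ^ 2 - 2 * a * t + 1 := by
  nlinarith [mul_nonneg ht (sub_nonneg.2 ha)]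

lemma quadratic_pos (ha : a < 1) (ht : 0 < t) : 0 < t ^ 2 - 2 * a * t + 1 := by
  nlinarith [sq_nonneg (t - 1), mul_pos ht (sub_pos.2 ha)]

lemma legendreKernel_eq_inv_sqrt (ha : a ≤ 1) (ht : 0 ≤ t) :
    legendreKernel a t = (√(t ^ 2 - 2 * a * t + 1))⁻¹ := by
  rw [legendreKernel, neg_div, rpow_neg ((sq_nonneg _).trans (sq_sub_one_le_quadratic ha ht)),
    ← sqrt_eq_rpow]

lemma legendreKernel_nonneg (ha : a ≤ 1) (ht : 0 ≤ t) : 0 ≤ legendreKernel a t := by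
  rw [legendreKernel_eq_inv_sqrt ha ht]
  positivity

lemma abs_sub_one_mul_legendreKernel_le_one (ha : a < 1) (ht : 0 < t) :
    |t - 1| * legendreKernel a t ≤ 1 := by
  have hsqrt : 0 < √(t ^ 2 - 2 * a * t + 1) := sqrt_pos.2 (quadratic_pos ha ht)
  rw [legendreKernel_eq_inv_sqrt ha.le ht.le, ← div_eq_mul_inv, div_le_one hsqrt]
  exact abs_le_sqrt (sq_sub_one_le_quadratic ha.le ht.le)

lemma legendreKernel_le_two (ha : a < 1) (ht : t ∈ Ioc 0 (1 / 2)) : legendreKernel a t ≤ 2 := by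
  have h := abs_sub_one_mul_legendreKernel_le_one ha ht.1
  rw [abs_of_nonpos (by linarith [ht.2])] at h
  nlinarith [legendreKernel_nonneg ha.le ht.1.le, ht.2]

lemma legendreKernel_le_three_mul_inv (ha : a < 1) (ht : 3 / 2 < t) :
    legendreKernel a t ≤ 3 * t⁻¹ := by
  have ht₀ : 0 < t := by linarith
  have h := abs_sub_one_mul_legendreKernel_le_one ha ht₀
  rw [abs_of_nonneg (by linarith)] at h
  rw [← div_eq_mul_inv, le_div_iff₀ ht₀]
  nlinarith [legendreKernel_nonneg ha.le ht₀.le]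

lemma continuousOn_legendreKernel (ha : a < 1) : ContinuousOn (legendreKernel a) (Ioi 0) :=
  fun t ht ↦ ((by fun_prop : Continuous fun t : ℝ ↦ t ^ 2 - 2 * a * t + 1).continuousAt.rpow_const
    (Or.inl (quadratic_pos ha ht).ne')).continuousWithinAt

lemma sub_add_sqrt_quadratic_pos (ha : a < 1) (ht : 0 < t) :
    0 < t - a + √(t ^ 2 - 2 * a * t + 1) := by
  rcases le_or_gt a t with hat | hat
  · linarith [sqrt_pos.2 (quadratic_pos ha ht)]
  · have : a - t < √(t ^ 2 - 2 * a * t + 1) := (lt_sqrt (by linarith)).2 (by nlinarith)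
    linarith

lemma hasDerivAt_log_sub_add_sqrt_quadratic (ha : a < 1) (ht : 0 < t) :
    HasDerivAt (fun t ↦ log (t - a + √(t ^ 2 - 2 * a * t + 1))) (legendreKernel a t) t := by
  have hq := quadratic_pos ha ht
  have hG := sub_add_sqrt_quadratic_pos ha ht
  have hquad : HasDerivAt (fun t ↦ t ^ 2 - 2 * a * t + 1) (2 * t - 2 * a) t := by
    simpa using ((hasDerivAt_pow 2 t).sub ((hasDerivAt_id t).const_mul (2 * a))).add_const 1
  have hG' : HasDerivAt (fun t ↦ t - a + √(t ^ 2 - 2 * a * t + 1))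
      (1 + (2 * t - 2 * a) / (2 * √(t ^ 2 - 2 * a * t + 1))) t :=
    ((hasDerivAt_id t).sub_const a).add (hquad.sqrt hq.ne')
  convert hG'.log hG.ne' using 1
  rw [legendreKernel_eq_inv_sqrt ha.le ht.le, eq_div_iff hG.ne']
  have hs : √(t ^ 2 - 2 * a * t + 1) ≠ 0 := (sqrt_pos.2 hq).ne'
  generalize √(t ^ 2 - 2 * a * t + 1) = S at hs ⊢
  field_simp
  ring

lemma integral_legendreKernel {b c : ℝ} (ha : a < 1) (hb : 0 < b) (hc : 0 < c) :
    ∫ t in b..c, legendreKernel a t =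
      log (c - a + √(c ^ 2 - 2 * a * c + 1)) - log (b - a + √(b ^ 2 - 2 * a * b + 1)) := by
  have hpos : ∀ t ∈ uIcc b c, 0 < t := fun t ht ↦ lt_of_lt_of_le (lt_min hb hc) ht.1
  exact intervalIntegral.integral_eq_sub_of_hasDerivAt
    (fun t ht ↦ hasDerivAt_log_sub_add_sqrt_quadratic ha (hpos t ht))
    ((continuousOn_legendreKernel ha).mono hpos).intervalIntegrable

lemma abs_integral_legendreKernel_add_log_le (ha : a ∈ Ico (-1) 1) :
    |(∫ t in (1 / 2 : ℝ)..3 / 2, legendreKernel a t) + log ((1 - a) / 2)| ≤ 4 := by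
  obtain ⟨ha₁, ha₂⟩ := ha
  rw [integral_legendreKernel ha₂ (by norm_num) (by norm_num)]
  set r₁ := √((1 / 2) ^ 2 - 2 * a * (1 / 2) + 1)
  set r₂ := √((3 / 2) ^ 2 - 2 * a * (3 / 2) + 1)
  have hr₁ : 1 - a / 2 ≤ r₁ ∧ r₁ ≤ 3 / 2 - a :=
    ⟨(le_sqrt (by linarith) (by nlinarith)).2 (by nlinarith),
      sqrt_le_iff.2 ⟨by linarith, by nlinarith⟩⟩
  have hr₂ : 1 / 2 ≤ r₂ ∧ r₂ ≤ 5 / 2 :=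
    ⟨(le_sqrt (by norm_num) (by nlinarith)).2 (by nlinarith),
      sqrt_le_iff.2 ⟨by norm_num, by nlinarith⟩⟩
  have hs : 0 < (1 - a) / 2 := by linarith
  have hratio : 3 ≤ (1 / 2 - a + r₁) / ((1 - a) / 2) ∧ (1 / 2 - a + r₁) / ((1 - a) / 2) ≤ 4 :=
    ⟨(le_div_iff₀ hs).2 (by linarith), (div_le_iff₀ hs).2 (by linarith)⟩
  have hsplit : log (3 / 2 - a + r₂) - log (1 / 2 - a + r₁) + log ((1 - a) / 2) =
      log (3 / 2 - a + r₂) - log ((1 / 2 - a + r₁) / ((1 - a) / 2)) := by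
    rw [log_div (by linarith) hs.ne']; ring
  have hlog5 : log 5 ≤ 4 := by linarith [log_le_sub_one_of_pos (by norm_num : (0 : ℝ) < 5)]
  have hlog4 : log 4 ≤ 4 := by linarith [log_le_sub_one_of_pos (by norm_num : (0 : ℝ) < 4)]
  rw [hsplit, abs_le]
  constructor <;> nlinarith [log_nonneg (by linarith : 1 ≤ 3 / 2 - a + r₂),
    log_le_log (by linarith) (by linarith : 3 / 2 - a + r₂ ≤ 5),
    log_nonneg (by linarith : (1 : ℝ) ≤ (1 / 2 - a + r₁) / ((1 - a) / 2)),
    log_le_log (by linarith) hratio.2]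

end LegendreKernel

section CpowMulLegendreKernel

variable {w : ℂ} {a : ℝ}

lemma continuousOn_cpow_mul_legendreKernel (ha : a < 1) :
    ContinuousOn (fun t : ℝ ↦ (t : ℂ) ^ w * legendreKernel a t) (Ioi 0) := fun t ht ↦
  ((Complex.continuousAt_ofReal_cpow_const t w (Or.inr (ne_of_gt ht))).mul
    (Complex.continuous_ofReal.continuousAt.comp
      ((continuousOn_legendreKernel ha).continuousAt (Ioi_mem_nhds ht)))).continuousWithinAt

lemma norm_cpow_mul_legendreKernel (ha : a ≤ 1) {t : ℝ} (ht : 0 < t) :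
    ‖(t : ℂ) ^ w * legendreKernel a t‖ = t ^ w.re * legendreKernel a t := by
  rw [norm_mul, Complex.norm_cpow_eq_rpow_re_of_pos ht, Complex.norm_real, norm_eq_abs,
    abs_of_nonneg (legendreKernel_nonneg ha ht.le)]

lemma norm_cpow_mul_legendreKernel_le_of_mem_Ioc (ha : a < 1) {t : ℝ} (ht : t ∈ Ioc 0 (1 / 2)) :
    ‖(t : ℂ) ^ w * legendreKernel a t‖ ≤ 2 * t ^ w.re := by
  rw [norm_cpow_mul_legendreKernel ha.le ht.1, mul_comm 2]
  exact mul_le_mul_of_nonneg_left (legendreKernel_le_two ha ht) (rpow_nonneg ht.1.le _)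

lemma norm_cpow_mul_legendreKernel_le_of_mem_Ioi (ha : a < 1) {t : ℝ} (ht : t ∈ Ioi (3 / 2)) :
    ‖(t : ℂ) ^ w * legendreKernel a t‖ ≤ 3 * t ^ (w.re - 1) := by
  have ht₀ : 0 < t := by linarith [mem_Ioi.1 ht]
  rw [norm_cpow_mul_legendreKernel ha.le ht₀, rpow_sub_one ht₀.ne', div_eq_mul_inv,
    mul_left_comm]
  exact mul_le_mul_of_nonneg_left (legendreKernel_le_three_mul_inv ha ht)
    (rpow_nonneg ht₀.le _)

lemma integrableOn_cpow_mul_legendreKernel (hw₁ : -1 < w.re) (hw₂ : w.re < 0) (ha : a < 1) :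
    IntegrableOn (fun t : ℝ ↦ (t : ℂ) ^ w * legendreKernel a t) (Ioi 0) := by
  have hcont := continuousOn_cpow_mul_legendreKernel (w := w) ha
  rw [← Ioc_union_Ioi_eq_Ioi (by norm_num : (0 : ℝ) ≤ 3 / 2),
    ← Ioc_union_Ioc_eq_Ioc (by norm_num : (0 : ℝ) ≤ 1 / 2) (by norm_num : (1 / 2 : ℝ) ≤ 3 / 2)]
  refine (IntegrableOn.union ?_ ?_).union ?_
  · exact integrableOn_Ioc_zero_of_norm_le_rpow hw₁ (hcont.mono fun t ht ↦ ht.1)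
      fun t ht ↦ norm_cpow_mul_legendreKernel_le_of_mem_Ioc ha ht
  · exact (hcont.mono fun t ht ↦ by norm_num at ht ⊢; linarith [ht.1]).integrableOn_Icc.mono_set
      Ioc_subset_Icc_self
  · exact integrableOn_Ioi_of_norm_le_rpow (by linarith) (by norm_num)
      (hcont.mono fun t ht ↦ by norm_num at ht ⊢; linarith)
      fun t ht ↦ norm_cpow_mul_legendreKernel_le_of_mem_Ioi ha ht

lemma norm_setIntegral_Ioc_cpow_mul_legendreKernel_sub_le (hw₁ : -1 ≤ w.re) (hw₂ : w.re ≤ 1)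
    (ha : a < 1) :
    ‖(∫ t in Ioc (1 / 2 : ℝ) (3 / 2), (t : ℂ) ^ w * legendreKernel a t) -
        ∫ t in (1 / 2 : ℝ)..3 / 2, (legendreKernel a t : ℂ)‖ ≤ 4 * ‖w‖ := by
  have hpos : ∀ t ∈ uIcc (1 / 2 : ℝ) (3 / 2), 0 < t := fun t ht ↦ by
    rw [uIcc_of_le (by norm_num)] at ht; linarith [ht.1]
  have hK : IntervalIntegrable (fun t ↦ (legendreKernel a t : ℂ)) volume (1 / 2) (3 / 2) :=
    (Complex.continuous_ofReal.comp_continuousOn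
      ((continuousOn_legendreKernel ha).mono hpos)).intervalIntegrable
  rw [← intervalIntegral.integral_of_le (by norm_num), ← intervalIntegral.integral_sub
    ((continuousOn_cpow_mul_legendreKernel ha).mono hpos).intervalIntegrable hK]
  refine (intervalIntegral.norm_integral_le_of_norm_le_const (C := 4 * ‖w‖)
    fun t ht ↦ ?_).trans_eq (by norm_num)
  rw [uIoc_of_le (by norm_num)] at ht
  have ht₀ : 0 < t := by linarith [ht.1]
  rw [← sub_one_mul, norm_mul, Complex.norm_real, norm_eq_abs,
    abs_of_nonneg (legendreKernel_nonneg ha.le ht₀.le)]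
  calc ‖(t : ℂ) ^ w - 1‖ * legendreKernel a t ≤ 4 * ‖w‖ * |t - 1| * legendreKernel a t := by
        gcongr
        · exact legendreKernel_nonneg ha.le ht₀.le
        · exact norm_ofReal_cpow_sub_one_le hw₁ hw₂ ⟨ht.1.le, ht.2⟩
    _ ≤ 4 * ‖w‖ * 1 := by
        rw [mul_assoc]
        exact mul_le_mul_of_nonneg_left (abs_sub_one_mul_legendreKernel_le_one ha ht₀)
          (by positivity)
    _ = 4 * ‖w‖ := mul_one _

lemma norm_setIntegral_cpow_mul_legendreKernel_add_log_le (hw₁ : -1 < w.re) (hw₂ : w.re < 0)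
    (ha : a ∈ Ico (-1) 1) :
    ‖(∫ t in Ioi (0 : ℝ), (t : ℂ) ^ w * legendreKernel a t) + log ((1 - a) / 2)‖ ≤
      2 * ((1 / 2) ^ (w.re + 1) / (w.re + 1)) + 3 * ((3 / 2) ^ w.re / -w.re) + 4 * ‖w‖ + 4 := by
  set F := fun t : ℝ ↦ (t : ℂ) ^ w * legendreKernel a t
  have hF := integrableOn_cpow_mul_legendreKernel hw₁ hw₂ ha.2
  have hA : ‖∫ t in Ioc 0 (1 / 2), F t‖ ≤ 2 * ((1 / 2) ^ (w.re + 1) / (w.re + 1)) :=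
    norm_setIntegral_Ioc_zero_le_of_norm_le_rpow hw₁ (by norm_num)
      fun t ht ↦ norm_cpow_mul_legendreKernel_le_of_mem_Ioc ha.2 ht
  have hB : ‖∫ t in Ioi (3 / 2), F t‖ ≤ 3 * ((3 / 2) ^ w.re / -w.re) := by
    simpa using norm_setIntegral_Ioi_le_of_norm_le_rpow (by linarith) (by norm_num)
      fun t ht ↦ norm_cpow_mul_legendreKernel_le_of_mem_Ioi ha.2 ht
  have hM := norm_setIntegral_Ioc_cpow_mul_legendreKernel_sub_le hw₁.le (by linarith) ha.2
  have hL := abs_integral_legendreKernel_add_log_le ha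
  have hsplit : ∫ t in Ioi 0, F t = (∫ t in Ioc 0 (1 / 2), F t) +
      (∫ t in Ioc (1 / 2) (3 / 2), F t) + ∫ t in Ioi (3 / 2), F t := by
    rw [← Ioc_union_Ioi_eq_Ioi (by norm_num : (0 : ℝ) ≤ 3 / 2), setIntegral_union
      (Ioc_disjoint_Ioi le_rfl) measurableSet_Ioi (hF.mono_set Ioc_subset_Ioi_self)
      (hF.mono_set (Ioi_subset_Ioi (by norm_num))), ← Ioc_union_Ioc_eq_Ioc
      (by norm_num : (0 : ℝ) ≤ 1 / 2) (by norm_num : (1 / 2 : ℝ) ≤ 3 / 2), setIntegral_union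
      (Ioc_disjoint_Ioc_of_le le_rfl) measurableSet_Ioc (hF.mono_set Ioc_subset_Ioi_self)
      (hF.mono_set (Ioc_subset_Ioi_self.trans (Ioi_subset_Ioi (by norm_num))))]
  set I := ∫ t in (1 / 2 : ℝ)..3 / 2, legendreKernel a t
  have hI : ∫ t in (1 / 2 : ℝ)..3 / 2, ((legendreKernel a t : ℝ) : ℂ) = I :=
    intervalIntegral.integral_ofReal
  rw [hI] at hM
  calc ‖(∫ t in Ioi 0, F t) + log ((1 - a) / 2)‖
      = ‖(∫ t in Ioc 0 (1 / 2), F t) + (∫ t in Ioi (3 / 2), F t) +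
          ((∫ t in Ioc (1 / 2) (3 / 2), F t) - I) + ((I + log ((1 - a) / 2) : ℝ) : ℂ)‖ := by
        rw [hsplit]; push_cast; congr 1; ring
    _ ≤ ‖∫ t in Ioc 0 (1 / 2), F t‖ + ‖∫ t in Ioi (3 / 2), F t‖ +
          ‖(∫ t in Ioc (1 / 2) (3 / 2), F t) - I‖ + |I + log ((1 - a) / 2)| := by
        rw [← norm_eq_abs, ← Complex.norm_real]
        exact norm_add₄_le
    _ ≤ _ := by gcongr

end CpowMulLegendreKernel

/-- For every `z ∈ ℂ` with `1 < Re z < 2` there is `C > 0`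
(depending only on `z`) such that for every `a ∈ [-1, 1)` the function
`t ↦ t^{z-1} (t² - 2at + 1)^{-1/2} / t` is absolutely integrable on `(0, ∞)` and
`|∫₀^∞ t^{z-1} (t² - 2at + 1)^{-1/2} dt/t + log((1-a)/2)| ≤ C`. -/
theorem stmt_4 (z : ℂ) (h1 : 1 < z.re) (h2 : z.re < 2) :
    ∃ C > (0 : ℝ), ∀ a ∈ Set.Ico (-1 : ℝ) 1,
      IntegrableOn
        (fun t : ℝ =>
          (t : ℂ) ^ (z - 1) * (((t ^ 2 - 2 * a * t + 1) ^ (-(1 : ℝ)/2) : ℝ) : ℂ) / (t : ℂ))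
        (Set.Ioi 0) ∧
      ‖(∫ t in Set.Ioi (0 : ℝ),
          (t : ℂ) ^ (z - 1) * (((t ^ 2 - 2 * a * t + 1) ^ (-(1 : ℝ)/2) : ℝ) : ℂ) / (t : ℂ))
          + (Real.log ((1 - a) / 2) : ℂ)‖ ≤ C := by
  have hw₁ : -1 < (z - 2).re := by simp only [Complex.sub_re, Complex.re_ofNat]; linarith
  have hw₂ : (z - 2).re < 0 := by simp only [Complex.sub_re, Complex.re_ofNat]; linarith
  have hC : 0 < 2 * ((1 / 2) ^ ((z - 2).re + 1) / ((z - 2).re + 1)) +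
      3 * ((3 / 2) ^ (z - 2).re / -(z - 2).re) + 4 * ‖z - 2‖ + 4 := by
    have : 0 < -(z - 2).re := neg_pos.2 hw₂
    have : 0 < (z - 2).re + 1 := by linarith
    positivity
  refine ⟨_, hC, fun a ha ↦ ?_⟩
  have hEq : EqOn
      (fun t : ℝ ↦ (t : ℂ) ^ (z - 1) * (((t ^ 2 - 2 * a * t + 1) ^ (-(1 : ℝ)/2) : ℝ) : ℂ) / t)
      (fun t : ℝ ↦ (t : ℂ) ^ (z - 2) * legendreKernel a t) (Ioi 0) := fun t ht ↦ by
    dsimp only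
    rw [show z - 2 = z - 1 - 1 by ring,
      Complex.cpow_sub (z - 1) 1 (Complex.ofReal_ne_zero.2 (ne_of_gt ht)), Complex.cpow_one,
      mul_div_right_comm, legendreKernel]
  refine ⟨(integrableOn_congr_fun hEq measurableSet_Ioi).2
    (integrableOn_cpow_mul_legendreKernel hw₁ hw₂ ha.2), ?_⟩
  rw [setIntegral_congr_fun measurableSet_Ioi hEq]
  exact norm_setIntegral_cpow_mul_legendreKernel_add_log_le hw₁ hw₂ ha
end

section
/- For every β ∈ (0, 2π), every x ∈ (0, 1), and every ξ ∈ ℝ, one has |sin((π − β)(x + iξ)) / sin(π(x + iξ))| ≤ |sin((π − β)x) / sin(πx)|. (Consequently the maximum modulus along the vertical line {Re w = x} of the function w ↦ (1/2) sin((π−β)w)/sin(πw), which parametrizes the curve Σ_{α,β} for x = (1−α)/2, is attained at the real point w = x.) -/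
/-!
Write `w = u + iv` and `|sin w|² = sin² u + sinh² v`. After squaring and clearing
denominators, the inequality `|sin(tw) / sin w| ≤ |sin(tu) / sin u|` for `|t| ≤ 1`,
`0 < u < π` reduces to `|sinh(tv)| sin u ≤ |sin(tu)| |sinh v|`. This is the product of
`|sinh(tv)| ≤ |t| |sinh v|` (convexity of `sinh` on `[0, ∞)`) and
`|t| sin u ≤ |sin(tu)|` (concavity of `sin` on `[0, π]`), both chords through the origin.
The theorem is the case `t = (π - β) / π`, `w = π (x + iξ)`.
-/

open Real

lemma ConvexOn.map_mul_le {s : Set ℝ} {f : ℝ → ℝ} (hf : ConvexOn ℝ s f) (h0 : 0 ∈ s)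
    (hf0 : f 0 = 0) {t y : ℝ} (ht0 : 0 ≤ t) (ht1 : t ≤ 1) (hy : y ∈ s) :
    f (t * y) ≤ t * f y := by
  simpa [hf0] using hf.2 h0 hy (sub_nonneg.2 ht1) ht0 (by ring)

lemma ConcaveOn.mul_le_map_mul {s : Set ℝ} {f : ℝ → ℝ} (hf : ConcaveOn ℝ s f) (h0 : 0 ∈ s)
    (hf0 : f 0 = 0) {t y : ℝ} (ht0 : 0 ≤ t) (ht1 : t ≤ 1) (hy : y ∈ s) :
    t * f y ≤ f (t * y) := by
  simpa using hf.neg.map_mul_le h0 (by simp [hf0]) ht0 ht1 hy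

lemma Real.convexOn_sinh : ConvexOn ℝ (Set.Ici 0) sinh := by
  refine MonotoneOn.convexOn_of_deriv (convex_Ici 0) continuous_sinh.continuousOn
    differentiable_sinh.differentiableOn ?_
  intro x hx y hy hxy
  rw [interior_Ici] at hx hy
  rwa [Real.deriv_sinh, cosh_le_cosh, abs_of_pos hx, abs_of_pos (Set.mem_Ioi.1 hy)]

lemma Real.abs_sinh_mul_le {t : ℝ} (ht : |t| ≤ 1) (y : ℝ) :
    |sinh (t * y)| ≤ |t| * |sinh y| := by
  rw [abs_sinh, abs_sinh, abs_mul]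
  exact convexOn_sinh.map_mul_le Set.self_mem_Ici sinh_zero (abs_nonneg t) ht
    (abs_nonneg y)

lemma Real.abs_mul_sin_le {t y : ℝ} (ht : |t| ≤ 1) (hy0 : 0 ≤ y) (hyπ : y ≤ π) :
    |t| * sin y ≤ |sin (t * y)| := by
  have hconc : |t| * sin y ≤ sin (|t| * y) :=
    strictConcaveOn_sin_Icc.concaveOn.mul_le_map_mul ⟨le_rfl, pi_pos.le⟩ sin_zero
      (abs_nonneg t) ht ⟨hy0, hyπ⟩
  refine hconc.trans ?_
  rcases abs_choice t with h | h <;> rw [h]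
  · exact le_abs_self _
  · rw [neg_mul, sin_neg]; exact neg_le_abs _

lemma Complex.normSq_sin_add_mul_I (u v : ℝ) :
    normSq (sin (u + v * I)) = Real.sin u ^ 2 + Real.sinh v ^ 2 := by
  rw [sin_add_mul_I, ← ofReal_sin, ← ofReal_cos, ← ofReal_sinh, ← ofReal_cosh,
    ← ofReal_mul, ← ofReal_mul, normSq_add_mul_I]
  linear_combination Real.sin u ^ 2 * Real.cosh_sq v + Real.sinh v ^ 2 * Real.sin_sq_add_cos_sq u

lemma Complex.norm_sin_mul_div_sin_le {t : ℝ} (ht : |t| ≤ 1) {w : ℂ} (hw0 : 0 < w.re)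
    (hwπ : w.re < π) :
    ‖sin (t * w) / sin w‖ ≤ |Real.sin (t * w.re) / Real.sin w.re| := by
  set u := w.re
  set v := w.im
  have hw : w = u + v * I := (re_add_im w).symm
  have htw : (t : ℂ) * w = ((t * u : ℝ) : ℂ) + ((t * v : ℝ) : ℂ) * I := by
    rw [hw]; push_cast; ring
  have hsin : 0 < Real.sin u := sin_pos_of_pos_of_lt_pi hw0 hwπ
  have hkey : |Real.sinh (t * v)| * Real.sin u ≤ |Real.sin (t * u)| * |Real.sinh v| :=
    calc |Real.sinh (t * v)| * Real.sin u
        ≤ |t| * |Real.sinh v| * Real.sin u := by gcongr; exact abs_sinh_mul_le ht v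
      _ = |t| * Real.sin u * |Real.sinh v| := by ring
      _ ≤ |Real.sin (t * u)| * |Real.sinh v| := by
        gcongr; exact abs_mul_sin_le ht hw0.le hwπ.le
  have hkey_sq : Real.sinh (t * v) ^ 2 * Real.sin u ^ 2
      ≤ Real.sin (t * u) ^ 2 * Real.sinh v ^ 2 := by
    simpa only [mul_pow, sq_abs] using pow_le_pow_left₀ (by positivity) hkey 2
  have hnum : ‖sin (t * w)‖ ^ 2 = Real.sin (t * u) ^ 2 + Real.sinh (t * v) ^ 2 := by
    rw [Complex.sq_norm, htw, normSq_sin_add_mul_I]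
  have hden : ‖sin w‖ ^ 2 = Real.sin u ^ 2 + Real.sinh v ^ 2 := by
    rw [Complex.sq_norm, hw, normSq_sin_add_mul_I]
  have hden_pos : 0 < ‖sin w‖ := (norm_nonneg _).lt_of_ne' <| sq_pos_iff.1 <| by
    rw [hden]; exact add_pos_of_pos_of_nonneg (pow_pos hsin 2) (sq_nonneg _)
  rw [norm_div, abs_div, abs_of_pos hsin, div_le_div_iff₀ hden_pos hsin,
    ← pow_le_pow_iff_left₀ (by positivity) (by positivity) two_ne_zero, mul_pow, mul_pow,
    hnum, hden, sq_abs]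
  linear_combination hkey_sq

/-- For every `β ∈ (0, 2π)`, `x ∈ (0, 1)` and `ξ ∈ ℝ`,
`|sin((π-β)(x+iξ)) / sin(π(x+iξ))| ≤ |sin((π-β)x) / sin(πx)|`: the maximal modulus
along the vertical line `Re w = x` is attained at the real point `w = x`. -/
theorem stmt_6 (β x : ℝ) (hβ : β ∈ Set.Ioo 0 (2 * π)) (hx : x ∈ Set.Ioo (0 : ℝ) 1)
    (ξ : ℝ) :
    ‖Complex.sin (((π : ℂ) - (β : ℂ)) * ((x : ℂ) + (ξ : ℂ) * Complex.I)) /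
        Complex.sin ((π : ℂ) * ((x : ℂ) + (ξ : ℂ) * Complex.I))‖
      ≤ |Real.sin ((π - β) * x) / Real.sin (π * x)| := by
  have ht : |(π - β) / π| ≤ 1 := by
    rw [abs_div, abs_of_pos pi_pos, div_le_one pi_pos, abs_le]
    constructor <;> linarith [hβ.1, hβ.2]
  have hre : ((π : ℂ) * ((x : ℂ) + (ξ : ℂ) * Complex.I)).re = π * x := by simp
  have hw0 : 0 < π * x := mul_pos pi_pos hx.1
  have hwπ : π * x < π := mul_lt_of_lt_one_right pi_pos hx.2
  have h := Complex.norm_sin_mul_div_sin_le ht (hre ▸ hw0) (hre ▸ hwπ)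
  have harg : (π - β) / π * (π * x) = (π - β) * x := by field_simp
  have hcarg : (((π - β) / π : ℝ) : ℂ) * (π * (x + ξ * Complex.I))
      = (π - β) * (x + ξ * Complex.I) := by
    rw [← mul_assoc, ← Complex.ofReal_mul, div_mul_cancel₀ _ pi_ne_zero]; push_cast; ring
  rwa [hre, harg, hcarg] at h
end

section
/- There exists a constant C > 0 such that for every c ∈ [−1, 1) the function t ↦ t^{3/2} |log t| (t² − 2ct + 1)^{−3/2} · t^{−1} is integrable on (0, ∞) and ∫₀^∞ t^{3/2} |log t| (t² − 2ct + 1)^{−3/2} dt/t ≤ C (1 − c)^{−1/2}. -/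
/-!
From `log √t ≤ √t - 1` and `1 - 1/√t ≤ log √t` one gets `√t |log t| ≤ 2 |t - 1|`, and for
`c ∈ [-1, 1]`, `t ≥ 0` the quadratic satisfies `(t - 1)² + (1 - c) ≤ 3 (t² - 2ct + 1)`.
So with `a = 1 - c` the integrand is at most `2 · 3^{3/2} |t - 1| ((t - 1)² + a)^{-3/2}`,
whose integral over all of `ℝ` is `2 · 3^{3/2} · 2 a^{-1/2}`: the even function
`|s| (s² + a)^{-3/2}` has antiderivative `-(s² + a)^{-1/2}` on `s > 0`.
-/

open MeasureTheory Real Set Filter Topology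

section
variable {a : ℝ}

lemma hasDerivAt_neg_rpow_sq_add (ha : 0 < a) (s : ℝ) :
    HasDerivAt (fun s : ℝ => -(s ^ 2 + a) ^ (-(1 : ℝ)/2)) (s * (s ^ 2 + a) ^ (-(3 : ℝ)/2)) s := by
  have h := ((hasDerivAt_pow 2 s).add_const a).rpow_const (p := -(1 : ℝ)/2)
    (Or.inl (by positivity))
  refine h.neg.congr_deriv ?_
  rw [show -(1 : ℝ)/2 - 1 = -(3 : ℝ)/2 by norm_num]
  push_cast
  ring

lemma tendsto_rpow_sq_add_atTop :
    Tendsto (fun s : ℝ => (s ^ 2 + a) ^ (-(1 : ℝ)/2)) atTop (𝓝 0) := by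
  have h := (tendsto_rpow_neg_atTop (by norm_num : (0 : ℝ) < 1/2)).comp
    (tendsto_atTop_add_const_right _ a (tendsto_pow_atTop two_ne_zero))
  simpa [Function.comp_def, neg_div] using h

lemma integral_Ioi_mul_rpow_sq_add (ha : 0 < a) :
    ∫ s in Ioi 0, s * (s ^ 2 + a) ^ (-(3 : ℝ)/2) = a ^ (-(1 : ℝ)/2) := by
  rw [integral_Ioi_of_hasDerivAt_of_nonneg' (fun s _ => hasDerivAt_neg_rpow_sq_add ha s)
    (fun s hs => mul_nonneg (le_of_lt hs) (by positivity)) tendsto_rpow_sq_add_atTop.neg]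
  simp

lemma integral_abs_mul_rpow_sq_add (ha : 0 < a) :
    ∫ s, |s| * (s ^ 2 + a) ^ (-(3 : ℝ)/2) = 2 * a ^ (-(1 : ℝ)/2) := by
  have h := integral_comp_abs (f := fun s => s * (s ^ 2 + a) ^ (-(3 : ℝ)/2))
  simp only [sq_abs] at h
  rw [h, integral_Ioi_mul_rpow_sq_add ha]

lemma integrable_abs_mul_rpow_sq_add (ha : 0 < a) :
    Integrable (fun s : ℝ => |s| * (s ^ 2 + a) ^ (-(3 : ℝ)/2)) :=
  -- `integral_comp_abs` needs no integrability, so its nonzero value forces integrability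
  Integrable.of_integral_ne_zero (by rw [integral_abs_mul_rpow_sq_add ha]; positivity)

end

lemma sqrt_mul_abs_log_le {t : ℝ} (ht : 0 < t) : √t * |log t| ≤ 2 * |t - 1| := by
  have hs : 0 < √t := sqrt_pos.2 ht
  have hlog : log t = 2 * log √t := by rw [log_sqrt ht.le]; ring
  have hsq : √t * √t = t := mul_self_sqrt ht.le
  rcases le_total 1 t with h1 | h1
  · have hs1 : 1 ≤ √t := one_le_sqrt.2 h1
    have hlog_le : log √t ≤ √t - 1 := log_le_sub_one_of_pos hs
    rw [abs_of_nonneg (log_nonneg h1), abs_of_nonneg (by linarith)]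
    nlinarith
  · have hs1 : √t ≤ 1 := sqrt_le_one.2 h1
    have hlog_ge : 1 - (√t)⁻¹ ≤ log √t := one_sub_inv_le_log_of_pos hs
    have hinv : √t * (√t)⁻¹ = 1 := mul_inv_cancel₀ hs.ne'
    rw [abs_of_nonpos (log_nonpos ht.le h1), abs_of_nonpos (by linarith)]
    nlinarith

lemma sq_sub_one_add_le_three_mul {c t : ℝ} (hc : c ∈ Icc (-1) 1) (ht : 0 ≤ t) :
    (t - 1) ^ 2 + (1 - c) ≤ 3 * (t ^ 2 - 2 * c * t + 1) := by
  obtain ⟨hc1, hc2⟩ := hc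
  rcases le_total c (1/3) with h | h
  · nlinarith [mul_nonneg ht (by linarith : (0:ℝ) ≤ 2 - 6 * c)]
  · nlinarith [sq_nonneg (2 * t + 1 - 3 * c),
      mul_nonneg (sub_nonneg.2 hc2) (by linarith : (0:ℝ) ≤ 9 * c + 1)]

lemma abs_integrand_le {c t : ℝ} (hc : c ∈ Ico (-1) 1) (ht : 0 < t) :
    |t ^ ((3 : ℝ)/2) * |log t| * (t ^ 2 - 2 * c * t + 1) ^ (-(3 : ℝ)/2) / t|
      ≤ 2 * 3 ^ ((3 : ℝ)/2) * (|t - 1| * ((t - 1) ^ 2 + (1 - c)) ^ (-(3 : ℝ)/2)) := by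
  have hb : 0 < (t - 1) ^ 2 + (1 - c) := by nlinarith [hc.2]
  have hq : 0 < t ^ 2 - 2 * c * t + 1 := by nlinarith [mul_pos ht (sub_pos.2 hc.2)]
  have hroot : t ^ ((3 : ℝ)/2) / t = √t := by
    rw [sqrt_eq_rpow, ← rpow_sub_one ht.ne']
    norm_num
  have hpow : (t ^ 2 - 2 * c * t + 1) ^ (-(3 : ℝ)/2)
      ≤ 3 ^ ((3 : ℝ)/2) * ((t - 1) ^ 2 + (1 - c)) ^ (-(3 : ℝ)/2) :=
    calc (t ^ 2 - 2 * c * t + 1) ^ (-(3 : ℝ)/2) ≤ (((t - 1) ^ 2 + (1 - c)) / 3) ^ (-(3 : ℝ)/2) :=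
          rpow_le_rpow_of_nonpos (by positivity)
            (by linarith [sq_sub_one_add_le_three_mul (Ico_subset_Icc_self hc) ht.le])
            (by norm_num)
    _ = 3 ^ ((3 : ℝ)/2) * ((t - 1) ^ 2 + (1 - c)) ^ (-(3 : ℝ)/2) := by
          rw [div_rpow hb.le (by norm_num), div_eq_mul_inv, ← rpow_neg (by norm_num)]
          norm_num
          ring
  calc |t ^ ((3 : ℝ)/2) * |log t| * (t ^ 2 - 2 * c * t + 1) ^ (-(3 : ℝ)/2) / t|
      = √t * |log t| * (t ^ 2 - 2 * c * t + 1) ^ (-(3 : ℝ)/2) := by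
        rw [abs_of_nonneg (by positivity), ← hroot]
        ring
    _ ≤ 2 * |t - 1| * (3 ^ ((3 : ℝ)/2) * ((t - 1) ^ 2 + (1 - c)) ^ (-(3 : ℝ)/2)) :=
        mul_le_mul (sqrt_mul_abs_log_le ht) hpow (by positivity) (by positivity)
    _ = 2 * 3 ^ ((3 : ℝ)/2) * (|t - 1| * ((t - 1) ^ 2 + (1 - c)) ^ (-(3 : ℝ)/2)) := by ring

/-- There is `C > 0` such that for every `c ∈ [-1, 1)` the function
`t ↦ t^{3/2} |log t| (t² - 2ct + 1)^{-3/2} / t` is integrable on `(0, ∞)` and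
`∫₀^∞ t^{3/2} |log t| (t² - 2ct + 1)^{-3/2} dt/t ≤ C (1-c)^{-1/2}`. -/
theorem stmt_7 :
    ∃ C > (0 : ℝ), ∀ c ∈ Set.Ico (-1 : ℝ) 1,
      IntegrableOn
        (fun t : ℝ =>
          t ^ ((3 : ℝ)/2) * |Real.log t| * (t ^ 2 - 2 * c * t + 1) ^ (-(3 : ℝ)/2) / t)
        (Set.Ioi 0) ∧
      (∫ t in Set.Ioi (0 : ℝ),
          t ^ ((3 : ℝ)/2) * |Real.log t| * (t ^ 2 - 2 * c * t + 1) ^ (-(3 : ℝ)/2) / t)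
        ≤ C * (1 - c) ^ (-(1 : ℝ)/2) := by
  refine ⟨4 * 3 ^ ((3 : ℝ)/2), by positivity, fun c hc => ?_⟩
  have ha : 0 < 1 - c := sub_pos.2 hc.2
  set g : ℝ → ℝ := fun t => 2 * 3 ^ ((3 : ℝ)/2) * (|t - 1| * ((t - 1) ^ 2 + (1 - c)) ^ (-(3 : ℝ)/2))
  have hg : Integrable g := ((integrable_abs_mul_rpow_sq_add ha).comp_sub_right 1).const_mul _
  have hf : IntegrableOn (fun t : ℝ =>
      t ^ ((3 : ℝ)/2) * |log t| * (t ^ 2 - 2 * c * t + 1) ^ (-(3 : ℝ)/2) / t) (Ioi 0) :=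
    hg.integrableOn.mono' (Measurable.aestronglyMeasurable (by fun_prop))
      (ae_restrict_of_forall_mem measurableSet_Ioi fun t ht => abs_integrand_le hc ht)
  refine ⟨hf, ?_⟩
  calc _ ≤ ∫ t in Ioi 0, g t := setIntegral_mono_on hf hg.integrableOn measurableSet_Ioi
        fun t ht => (le_abs_self _).trans (abs_integrand_le hc ht)
    _ ≤ ∫ t, g t := setIntegral_le_integral hg (ae_of_all _ fun t => by positivity)
    _ = 4 * 3 ^ ((3 : ℝ)/2) * (1 - c) ^ (-(1 : ℝ)/2) := by
        rw [integral_const_mul, integral_sub_right_eq_self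
          (fun s => |s| * (s ^ 2 + (1 - c)) ^ (-(3 : ℝ)/2)), integral_abs_mul_rpow_sq_add ha]
        ring
end

section
/- There exists a constant C > 0 such that for every c ∈ [−1, 1) the function h ↦ h^{1/2} (h² − 2ch + 1)^{−3/4} · h^{−1} is integrable on (0, ∞) and ∫₀^∞ h^{1/2} (h² − 2ch + 1)^{−3/4} dh/h ≤ C (1 − c)^{−1/4}. -/
/-!
Write `h² - 2ch + 1 = (h - 1)² + 2(1 - c)h` and `a = 1 - c`. On `(0, 1/2]` this is at least `1/4`,
so the integrand is at most a constant times the integrable `h^{-1/2}`, uniformly in `c`. On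
`[1/2, ∞)` it is at least `(h - 1)² + a` and `h^{-1/2} ≤ √2`, so the integrand is dominated by a
translate of `(t² + a)^{-3/4}`, whose integral over `ℝ` is `a^{-1/4} ∫ (t² + 1)^{-3/4}` by the
substitution `t = √a s`. Since `a ≤ 2`, the first, bounded part is also `O(a^{-1/4})`.
-/

open MeasureTheory Real Set

lemma rpow_neg_sq_add_eq {a : ℝ} (ha : 0 < a) (p t : ℝ) :
    (t ^ 2 + a) ^ (-p) = a ^ (-p) * ((t / √a) ^ 2 + 1) ^ (-p) := by
  have hscale : (t / √a) ^ 2 + 1 = (t ^ 2 + a) / a := by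
    rw [div_pow, sq_sqrt ha.le]; field_simp
  rw [hscale, div_rpow (by positivity) ha.le, mul_div_cancel₀ _ (by positivity)]

lemma integrable_rpow_neg_sq_add {p a : ℝ} (hp : 1 / 2 < p) (ha : 0 < a) :
    Integrable fun t : ℝ => (t ^ 2 + a) ^ (-p) := by
  have hone : Integrable fun t : ℝ => (t ^ 2 + 1) ^ (-p) := by
    convert integrable_rpow_neg_one_add_norm_sq (E := ℝ) (μ := volume) (r := 2 * p)
      (by simp; linarith) using 2 with t
    rw [norm_eq_abs, sq_abs, add_comm]; ring_nf
  simp_rw [rpow_neg_sq_add_eq ha]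
  exact (hone.comp_div (sqrt_pos.2 ha).ne').const_mul _

lemma integral_rpow_neg_sq_add {a : ℝ} (ha : 0 < a) (p : ℝ) :
    ∫ t : ℝ, (t ^ 2 + a) ^ (-p) = a ^ (1 / 2 - p) * ∫ t : ℝ, (t ^ 2 + 1) ^ (-p) := by
  simp_rw [rpow_neg_sq_add_eq ha, integral_const_mul,
    Measure.integral_comp_div (fun t => (t ^ 2 + 1) ^ (-p)), abs_of_pos (sqrt_pos.2 ha),
    smul_eq_mul, ← mul_assoc, sqrt_eq_rpow, ← rpow_add ha]
  ring_nf

lemma integrableOn_and_setIntegral_le_of_le {α : Type*} [MeasurableSpace α] {μ : Measure α}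
    {s : Set α} {f F : α → ℝ} (hs : MeasurableSet s) (hf : AEStronglyMeasurable f (μ.restrict s))
    (hF : IntegrableOn F s μ) (hf0 : ∀ x ∈ s, 0 ≤ f x) (hfF : ∀ x ∈ s, f x ≤ F x) :
    IntegrableOn f s μ ∧ ∫ x in s, f x ∂μ ≤ ∫ x in s, F x ∂μ := by
  have hint : IntegrableOn f s μ := by
    refine hF.mono' hf ?_
    filter_upwards [ae_restrict_mem hs] with x hx
    rw [norm_eq_abs, abs_of_nonneg (hf0 x hx)]
    exact hfF x hx
  exact ⟨hint, setIntegral_mono_on hint hF hs hfF⟩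

lemma one_le_rpow_mul_rpow_neg {a b r : ℝ} (ha : 0 < a) (hab : a ≤ b) (hr : 0 ≤ r) :
    1 ≤ b ^ r * a ^ (-r) := by
  rw [rpow_neg ha.le, ← div_eq_mul_inv, one_le_div (by positivity)]
  exact rpow_le_rpow ha.le hab hr

lemma setIntegral_Ioc_zero_half_rpow :
    ∫ h in Ioc (0 : ℝ) (1 / 2), h ^ (-(1 : ℝ) / 2) = 2 * (1 / 2) ^ ((1 : ℝ) / 2) := by
  rw [← intervalIntegral.integral_of_le (by norm_num), integral_rpow (by norm_num)]
  norm_num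
  ring

lemma sq_sub_two_mul_add_one_eq (c h : ℝ) :
    h ^ 2 - 2 * c * h + 1 = (h - 1) ^ 2 + 2 * (1 - c) * h := by ring

noncomputable def radialKernel (c h : ℝ) : ℝ :=
  h ^ (-(1 : ℝ) / 2) * (h ^ 2 - 2 * c * h + 1) ^ (-(3 : ℝ) / 4)

section radialKernel

variable {c h : ℝ}

lemma radialKernel_nonneg (hc : c ≤ 1) (hh : 0 ≤ h) : 0 ≤ radialKernel c h := by
  have : 0 ≤ h ^ 2 - 2 * c * h + 1 := by
    rw [sq_sub_two_mul_add_one_eq]; nlinarith [mul_nonneg (sub_nonneg.2 hc) hh, sq_nonneg (h - 1)]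
  unfold radialKernel; positivity

lemma radialKernel_le_of_le_half (hc : c ≤ 1) (h0 : 0 < h) (hh : h ≤ 1 / 2) :
    radialKernel c h ≤ (1 / 4) ^ (-(3 : ℝ) / 4) * h ^ (-(1 : ℝ) / 2) := by
  have hq : 1 / 4 ≤ h ^ 2 - 2 * c * h + 1 := by
    rw [sq_sub_two_mul_add_one_eq]; nlinarith [mul_nonneg (sub_nonneg.2 hc) h0.le]
  rw [radialKernel, mul_comm]
  exact mul_le_mul_of_nonneg_right (rpow_le_rpow_of_nonpos (by norm_num) hq (by norm_num))
    (rpow_nonneg h0.le _)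

lemma radialKernel_le_of_half_le (hc : c < 1) (hh : 1 / 2 ≤ h) :
    radialKernel c h ≤ (1 / 2) ^ (-(1 : ℝ) / 2) * ((h - 1) ^ 2 + (1 - c)) ^ (-(3 / 4 : ℝ)) := by
  have hq : (h - 1) ^ 2 + (1 - c) ≤ h ^ 2 - 2 * c * h + 1 := by
    rw [sq_sub_two_mul_add_one_eq]
    nlinarith [mul_nonneg (sub_nonneg.2 hc.le) (by linarith : 0 ≤ 2 * h - 1)]
  have hc' : 0 < 1 - c := sub_pos.2 hc
  rw [radialKernel, neg_div 4 (3 : ℝ)]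
  exact mul_le_mul (rpow_le_rpow_of_nonpos (by norm_num) hh (by norm_num))
    (rpow_le_rpow_of_nonpos (by positivity) hq (by norm_num))
    (rpow_nonneg ((by positivity : (0 : ℝ) ≤ (h - 1) ^ 2 + (1 - c)).trans hq) _) (by positivity)

lemma radialKernel_integrableOn_and_setIntegral_le (hc : c < 1) :
    IntegrableOn (radialKernel c) (Ioi 0) ∧
      ∫ h in Ioi 0, radialKernel c h ≤
        (1 / 4) ^ (-(3 : ℝ) / 4) * (2 * (1 / 2) ^ ((1 : ℝ) / 2)) +
          (1 / 2) ^ (-(1 : ℝ) / 2) * (∫ t : ℝ, (t ^ 2 + 1) ^ (-(3 / 4 : ℝ))) *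
            (1 - c) ^ (-(1 : ℝ) / 4) := by
  have hc' : 0 < 1 - c := sub_pos.2 hc
  have hmeas : AEStronglyMeasurable (radialKernel c) :=
    (by unfold radialKernel; fun_prop : Measurable (radialKernel c)).aestronglyMeasurable
  have hnear : IntegrableOn (fun h : ℝ => (1 / 4) ^ (-(3 : ℝ) / 4) * h ^ (-(1 : ℝ) / 2))
      (Ioc 0 (1 / 2)) :=
    (intervalIntegral.intervalIntegrable_rpow' (by norm_num)).1.const_mul _
  have hfar : Integrable fun h : ℝ =>
      (1 / 2) ^ (-(1 : ℝ) / 2) * ((h - 1) ^ 2 + (1 - c)) ^ (-(3 / 4 : ℝ)) :=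
    ((integrable_rpow_neg_sq_add (by norm_num) hc').comp_sub_right 1).const_mul _
  obtain ⟨hint₁, hle₁⟩ := integrableOn_and_setIntegral_le_of_le measurableSet_Ioc
    hmeas.restrict hnear (fun h hh => radialKernel_nonneg hc.le hh.1.le)
    (fun h hh => radialKernel_le_of_le_half hc.le hh.1 hh.2)
  obtain ⟨hint₂, hle₂⟩ := integrableOn_and_setIntegral_le_of_le measurableSet_Ioi
    hmeas.restrict hfar.integrableOn
    (fun h hh => radialKernel_nonneg hc.le ((by norm_num : (0 : ℝ) ≤ 1 / 2).trans hh.le))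
    (fun h hh => radialKernel_le_of_half_le hc (le_of_lt hh))
  have hsplit : Ioc (0 : ℝ) (1 / 2) ∪ Ioi (1 / 2) = Ioi 0 := Ioc_union_Ioi_eq_Ioi (by norm_num)
  refine ⟨hsplit ▸ hint₁.union hint₂, ?_⟩
  rw [← hsplit, setIntegral_union (Ioc_disjoint_Ioi le_rfl) measurableSet_Ioi hint₁ hint₂]
  gcongr
  · rwa [integral_const_mul, setIntegral_Ioc_zero_half_rpow] at hle₁
  · calc _ ≤ _ := hle₂
      _ ≤ ∫ h : ℝ, (1 / 2) ^ (-(1 : ℝ) / 2) * ((h - 1) ^ 2 + (1 - c)) ^ (-(3 / 4 : ℝ)) :=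
        setIntegral_le_integral hfar (ae_of_all _ fun h => by positivity)
      _ = _ := by
        rw [integral_const_mul, integral_sub_right_eq_self (fun t => (t ^ 2 + (1 - c)) ^ _),
          integral_rpow_neg_sq_add hc']
        norm_num
        ring

end radialKernel

lemma rpow_half_mul_div_eq_radialKernel (c : ℝ) {h : ℝ} (hh : 0 < h) :
    h ^ ((1 : ℝ) / 2) * (h ^ 2 - 2 * c * h + 1) ^ (-(3 : ℝ) / 4) / h = radialKernel c h := by
  rw [radialKernel, mul_div_right_comm, show -(1 : ℝ) / 2 = 1 / 2 - 1 by norm_num,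
    rpow_sub hh, rpow_one]

/-- There is `C > 0` such that for every `c ∈ [-1, 1)` the function
`h ↦ h^{1/2} (h² - 2ch + 1)^{-3/4} / h` is integrable on `(0, ∞)` and
`∫₀^∞ h^{1/2} (h² - 2ch + 1)^{-3/4} dh/h ≤ C (1-c)^{-1/4}`. -/
theorem stmt_9 :
    ∃ C > (0 : ℝ), ∀ c ∈ Set.Ico (-1 : ℝ) 1,
      IntegrableOn
        (fun h : ℝ => h ^ ((1 : ℝ)/2) * (h ^ 2 - 2 * c * h + 1) ^ (-(3 : ℝ)/4) / h)
        (Set.Ioi 0) ∧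
      (∫ h in Set.Ioi (0 : ℝ),
          h ^ ((1 : ℝ)/2) * (h ^ 2 - 2 * c * h + 1) ^ (-(3 : ℝ)/4) / h)
        ≤ C * (1 - c) ^ (-(1 : ℝ)/4) := by
  set A : ℝ := (1 / 4) ^ (-(3 : ℝ) / 4) * (2 * (1 / 2) ^ ((1 : ℝ) / 2))
  set B : ℝ := (1 / 2) ^ (-(1 : ℝ) / 2) * ∫ t : ℝ, (t ^ 2 + 1) ^ (-(3 / 4 : ℝ))
  have hA : 0 < A := by positivity
  have hB : 0 ≤ B := mul_nonneg (by positivity) (integral_nonneg fun t => by positivity)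
  refine ⟨2 ^ ((1 : ℝ) / 4) * A + B, add_pos_of_pos_of_nonneg (by positivity) hB, ?_⟩
  rintro c ⟨hc₁, hc₂⟩
  have hEq : EqOn (fun h : ℝ => h ^ ((1 : ℝ) / 2) * (h ^ 2 - 2 * c * h + 1) ^ (-(3 : ℝ) / 4) / h)
      (radialKernel c) (Ioi 0) := fun h hh => rpow_half_mul_div_eq_radialKernel c hh
  obtain ⟨hint, hle⟩ := radialKernel_integrableOn_and_setIntegral_le hc₂
  refine ⟨hint.congr_fun hEq.symm measurableSet_Ioi, ?_⟩
  have hone : 1 ≤ 2 ^ ((1 : ℝ) / 4) * (1 - c) ^ (-(1 : ℝ) / 4) := by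
    rw [neg_div]; exact one_le_rpow_mul_rpow_neg (by linarith) (by linarith) (by norm_num)
  rw [setIntegral_congr_fun measurableSet_Ioi hEq]
  calc _ ≤ A + B * (1 - c) ^ (-(1 : ℝ) / 4) := hle
    _ ≤ A * (2 ^ ((1 : ℝ) / 4) * (1 - c) ^ (-(1 : ℝ) / 4)) + B * (1 - c) ^ (-(1 : ℝ) / 4) := by
      gcongr; exact le_mul_of_one_le_right hA.le hone
    _ = _ := by ring
end

section
/- For every α ∈ [0, 1) there exists a constant C > 0 such that for all s' ∈ (0, 1): ∫₀^1 (s/s')^{(1−α)/2} · (s' / |s − s'|^{1/2}) · ds/s ≤ C (s')^{1/2} (1 + |log s'|), and likewise ∫₀^1 (s/s')^{(1−α)/2} · (s' / (s + s')^{1/2}) · ds/s ≤ C (s')^{1/2} (1 + |log s'|). -/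
/-!
Put `β = (1 - α) / 2 ∈ (0, 1/2]` and `c = s'`. The first integrand is
`c ^ (1 - β) * s ^ (β - 1) * |s - c| ^ (-1/2)`, and the second is dominated by it because
`|s - c| ≤ s + c`. Split `(0, 1)` at `c / 2` and `min (2c) 1`. Near `0`, `|s - c| ≥ c / 2` and
`∫ s ^ (β - 1)` contributes `c ^ β / β`; near the diagonal `s ^ (β - 1) ≤ 2 c ^ (β - 1)` while
`∫ |s - c| ^ (-1/2) ≤ 4 c ^ (1/2)`; beyond `2c`, `|s - c| ≥ s / 2` and
`s ^ (β - 3/2) ≤ c ^ (β - 1/2) / s`, whose integral gives the factor `|log c|`.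
-/

open MeasureTheory Real Set intervalIntegral

theorem intervalIntegrable_abs_rpow {p : ℝ} (hp : -1 < p) (a b : ℝ) :
    IntervalIntegrable (fun x => |x| ^ p) volume a b := by
  have nonneg : ∀ c, 0 ≤ c → IntervalIntegrable (fun x => |x| ^ p) volume 0 c := fun c hc =>
    (intervalIntegrable_rpow' hp).congr fun x hx => by
      rw [uIoc_of_le hc] at hx
      simp only [abs_of_pos hx.1]
  have from_zero : ∀ c, IntervalIntegrable (fun x => |x| ^ p) volume 0 c := fun c => by
    rcases le_total 0 c with hc | hc
    · exact nonneg c hc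
    · rw [IntervalIntegrable.iff_comp_neg]
      simpa using nonneg (-c) (neg_nonneg.mpr hc)
  exact (from_zero a).symm.trans (from_zero b)

theorem integral_abs_rpow_neg_to_self {p r : ℝ} (hp : -1 < p) (hr : 0 ≤ r) :
    ∫ x in (-r)..r, |x| ^ p = 2 * (r ^ (p + 1) / (p + 1)) := by
  have half : ∫ x in (0 : ℝ)..r, |x| ^ p = r ^ (p + 1) / (p + 1) := by
    have on_Icc : EqOn (fun x => |x| ^ p) (fun x => x ^ p) (uIcc 0 r) := fun x hx => by
      rw [uIcc_of_le hr] at hx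
      simp only [abs_of_nonneg hx.1]
    rw [integral_congr on_Icc, integral_rpow (Or.inl hp), zero_rpow (by linarith), sub_zero]
  have reflect : ∫ x in (-r)..0, |x| ^ p = ∫ x in (0 : ℝ)..r, |x| ^ p := by
    simpa using (integral_comp_neg (a := 0) (b := r) fun x => |x| ^ p).symm
  rw [← integral_add_adjacent_intervals (b := 0) (intervalIntegrable_abs_rpow hp _ _)
    (intervalIntegrable_abs_rpow hp _ _), reflect, half, two_mul]

theorem half_rpow_le_two_mul_rpow {x e : ℝ} (hx : 0 ≤ x) (he : -1 ≤ e) :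
    (x / 2) ^ e ≤ 2 * x ^ e := by
  have two_rpow : (2 : ℝ)⁻¹ ≤ 2 ^ e := by
    simpa [rpow_neg_one] using rpow_le_rpow_of_exponent_le one_le_two he
  rw [div_rpow hx zero_le_two, div_le_iff₀ (by positivity)]
  nlinarith [rpow_nonneg hx e]

theorem integrableOn_and_setIntegral_le_of_ae_le {X : Type*} [MeasurableSpace X] {μ : Measure X}
    {f g : X → ℝ} {s : Set X} (hf : AEStronglyMeasurable f (μ.restrict s))
    (hg : IntegrableOn g s μ) (hf0 : 0 ≤ᵐ[μ.restrict s] f) (hfg : f ≤ᵐ[μ.restrict s] g) :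
    IntegrableOn f s μ ∧ ∫ x in s, f x ∂μ ≤ ∫ x in s, g x ∂μ := by
  have hfi : IntegrableOn f s μ := hg.mono' hf <| by
    filter_upwards [hf0, hfg] with x h0 hle
    rwa [Real.norm_eq_abs, abs_of_nonneg h0]
  exact ⟨hfi, setIntegral_mono_ae_restrict hfi hg hfg⟩

theorem intervalIntegrable_and_integral_le_of_le {f g : ℝ → ℝ} {a b : ℝ} (hab : a ≤ b)
    (hf : AEStronglyMeasurable f volume) (hg : IntervalIntegrable g volume a b)
    (hf0 : ∀ x ∈ Ioo a b, 0 ≤ f x) (hfg : ∀ x ∈ Ioo a b, f x ≤ g x) :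
    IntervalIntegrable f volume a b ∧ ∫ x in a..b, f x ≤ ∫ x in a..b, g x := by
  rw [intervalIntegrable_iff_integrableOn_Ioo_of_le hab] at hg ⊢
  simp only [integral_of_le hab, integral_Ioc_eq_integral_Ioo]
  exact integrableOn_and_setIntegral_le_of_ae_le hf.restrict hg
    (ae_restrict_of_forall_mem measurableSet_Ioo hf0)
    (ae_restrict_of_forall_mem measurableSet_Ioo hfg)

noncomputable def powKernel (β c s : ℝ) : ℝ := s ^ (β - 1) * |s - c| ^ (-(1 / 2 : ℝ))

theorem measurable_powKernel (β c : ℝ) : Measurable (powKernel β c) := by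
  unfold powKernel; fun_prop

theorem powKernel_nonneg {β c s : ℝ} (hs : 0 ≤ s) : 0 ≤ powKernel β c s :=
  mul_nonneg (rpow_nonneg hs _) (rpow_nonneg (abs_nonneg _) _)

section PowKernel

variable {β c : ℝ}

theorem powKernel_near_zero (hβ : 0 < β) (hc : 0 < c) :
    IntervalIntegrable (powKernel β c) volume 0 (c / 2) ∧
      ∫ s in (0 : ℝ)..(c / 2), powKernel β c s ≤ 2 * c ^ (β - 1 / 2) / β := by
  have hc2 : 0 < c / 2 := half_pos hc
  have bound : ∀ s ∈ Ioo 0 (c / 2), powKernel β c s ≤ (c / 2) ^ (-(1 / 2 : ℝ)) * s ^ (β - 1) :=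
    fun s hs => by
      have hdist : c / 2 ≤ |s - c| := by
        rw [abs_sub_comm, abs_of_pos] <;> linarith [hs.2]
      rw [powKernel, mul_comm]
      exact mul_le_mul_of_nonneg_right (rpow_le_rpow_of_nonpos hc2 hdist (by norm_num))
        (rpow_nonneg hs.1.le _)
  obtain ⟨hint, hle⟩ := intervalIntegrable_and_integral_le_of_le hc2.le
    (measurable_powKernel β c).aestronglyMeasurable
    ((intervalIntegrable_rpow' (by linarith)).const_mul _)
    (fun s hs => powKernel_nonneg hs.1.le) bound
  refine ⟨hint, hle.trans ?_⟩
  rw [intervalIntegral.integral_const_mul, integral_rpow (Or.inl (by linarith)), sub_add_cancel,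
    zero_rpow hβ.ne', sub_zero, ← mul_div_assoc, ← rpow_add hc2]
  gcongr
  rw [neg_add_eq_sub]
  exact half_rpow_le_two_mul_rpow hc.le (by linarith)

theorem powKernel_near_diagonal (hβ0 : 0 ≤ β) (hβ1 : β ≤ 1) (hc : 0 < c) {b : ℝ}
    (hb : c / 2 ≤ b) (hb2 : b ≤ 2 * c) :
    IntervalIntegrable (powKernel β c) volume (c / 2) b ∧
      ∫ s in (c / 2)..b, powKernel β c s ≤ 8 * c ^ (β - 1 / 2) := by
  have hc2 : 0 < c / 2 := half_pos hc
  have singular_int : ∀ a b : ℝ,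
      IntervalIntegrable (fun s => |s - c| ^ (-(1 / 2 : ℝ))) volume a b := fun a b => by
    simpa using (intervalIntegrable_abs_rpow (by norm_num) (a - c) (b - c)).comp_sub_right c
  have singular_le : ∫ s in (c / 2)..b, |s - c| ^ (-(1 / 2 : ℝ)) ≤ 4 * c ^ (1 / 2 : ℝ) :=
    calc ∫ s in (c / 2)..b, |s - c| ^ (-(1 / 2 : ℝ))
        ≤ ∫ s in (0 : ℝ)..(2 * c), |s - c| ^ (-(1 / 2 : ℝ)) :=
          integral_mono_interval hc2.le hb hb2
            (Filter.Eventually.of_forall fun _ => rpow_nonneg (abs_nonneg _) _) (singular_int _ _)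
      _ = ∫ x in (-c)..c, |x| ^ (-(1 / 2 : ℝ)) := by
          rw [integral_comp_sub_right (fun x => |x| ^ (-(1 / 2 : ℝ)))]
          ring_nf
      _ = 4 * c ^ (1 / 2 : ℝ) := by
          rw [integral_abs_rpow_neg_to_self (by norm_num) hc.le]
          norm_num
          ring
  have bound : ∀ s ∈ Ioo (c / 2) b,
      powKernel β c s ≤ (c / 2) ^ (β - 1) * |s - c| ^ (-(1 / 2 : ℝ)) := fun s hs =>
    mul_le_mul_of_nonneg_right (rpow_le_rpow_of_nonpos hc2 hs.1.le (by linarith))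
      (rpow_nonneg (abs_nonneg _) _)
  obtain ⟨hint, hle⟩ := intervalIntegrable_and_integral_le_of_le hb
    (measurable_powKernel β c).aestronglyMeasurable ((singular_int _ _).const_mul _)
    (fun s hs => powKernel_nonneg (hc2.le.trans hs.1.le)) bound
  refine ⟨hint, hle.trans ?_⟩
  rw [intervalIntegral.integral_const_mul]
  calc (c / 2) ^ (β - 1) * ∫ s in (c / 2)..b, |s - c| ^ (-(1 / 2 : ℝ))
      ≤ (2 * c ^ (β - 1)) * (4 * c ^ (1 / 2 : ℝ)) :=
        mul_le_mul (half_rpow_le_two_mul_rpow hc.le (by linarith)) singular_le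
          (integral_nonneg hb fun _ _ => rpow_nonneg (abs_nonneg _) _) (by positivity)
    _ = 8 * c ^ (β - 1 / 2) := by
        rw [mul_mul_mul_comm, ← rpow_add hc]
        ring_nf

theorem powKernel_far (hβ : β ≤ 1 / 2) (hc0 : 0 < c) (hc1 : c < 1) :
    IntervalIntegrable (powKernel β c) volume (min (2 * c) 1) 1 ∧
      ∫ s in (min (2 * c) 1)..1, powKernel β c s ≤ 2 * c ^ (β - 1 / 2) * |log c| := by
  set b := min (2 * c) 1
  have hcb : c ≤ b := le_min (by linarith) hc1.le
  have hb0 : 0 < b := hc0.trans_le hcb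
  have hb1 : b ≤ 1 := min_le_right _ _
  have bound : ∀ s ∈ Ioo b 1, powKernel β c s ≤ 2 * c ^ (β - 1 / 2) * s⁻¹ := fun s hs => by
    have hs2c : 2 * c < s := by
      have := min_lt_iff.mp hs.1
      exact this.resolve_right hs.2.not_gt
    have hs0 : 0 < s := by linarith
    have hdist : s / 2 ≤ |s - c| := by rw [abs_of_pos] <;> linarith
    calc powKernel β c s ≤ s ^ (β - 1) * (2 * s ^ (-(1 / 2 : ℝ))) :=
          mul_le_mul_of_nonneg_left
            ((rpow_le_rpow_of_nonpos (by positivity) hdist (by norm_num)).trans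
              (half_rpow_le_two_mul_rpow hs0.le (by norm_num)))
            (rpow_nonneg hs0.le _)
      _ = 2 * s ^ (β - 1 / 2) * s⁻¹ := by
          rw [mul_left_comm, ← rpow_add hs0, ← rpow_neg_one, mul_assoc, ← rpow_add hs0]
          ring_nf
      _ ≤ 2 * c ^ (β - 1 / 2) * s⁻¹ := by
          have := rpow_le_rpow_of_nonpos hc0 (by linarith : c ≤ s) (by linarith : β - 1 / 2 ≤ 0)
          gcongr
  have inv_int : IntervalIntegrable (fun s => 2 * c ^ (β - 1 / 2) * s⁻¹) volume b 1 :=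
    (intervalIntegral.intervalIntegrable_inv (fun s hs => by
      rw [uIcc_of_le hb1] at hs; exact (hb0.trans_le hs.1).ne') continuousOn_id).const_mul _
  obtain ⟨hint, hle⟩ := intervalIntegrable_and_integral_le_of_le hb1
    (measurable_powKernel β c).aestronglyMeasurable inv_int
    (fun s hs => powKernel_nonneg (hb0.trans hs.1).le) bound
  refine ⟨hint, hle.trans ?_⟩
  have log_le : log (1 / b) ≤ |log c| := by
    rw [one_div, log_inv, abs_of_nonpos (log_nonpos hc0.le hc1.le)]
    exact neg_le_neg (log_le_log hc0 hcb)
  rw [intervalIntegral.integral_const_mul, integral_inv (by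
    rw [uIcc_of_le hb1]; exact fun h => hb0.not_ge h.1)]
  gcongr

theorem powKernel_unitInterval (hβ0 : 0 < β) (hβ : β ≤ 1 / 2) (hc0 : 0 < c) (hc1 : c < 1) :
    IntervalIntegrable (powKernel β c) volume 0 1 ∧
      ∫ s in (0 : ℝ)..1, powKernel β c s ≤ c ^ (β - 1 / 2) * (2 / β + 8 + 2 * |log c|) := by
  obtain ⟨int₁, le₁⟩ := powKernel_near_zero hβ0 hc0
  obtain ⟨int₂, le₂⟩ := powKernel_near_diagonal hβ0.le (by linarith) hc0
    (le_min (by linarith) (by linarith)) (min_le_left (2 * c) 1)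
  obtain ⟨int₃, le₃⟩ := powKernel_far hβ hc0 hc1
  refine ⟨(int₁.trans int₂).trans int₃, ?_⟩
  rw [← integral_add_adjacent_intervals (int₁.trans int₂) int₃,
    ← integral_add_adjacent_intervals int₁ int₂]
  have split : c ^ (β - 1 / 2) * (2 / β + 8 + 2 * |log c|) =
      2 * c ^ (β - 1 / 2) / β + 8 * c ^ (β - 1 / 2) + 2 * c ^ (β - 1 / 2) * |log c| := by ring
  linarith

end PowKernel

theorem abs_sub_integrand_eq_mul_powKernel {β c s : ℝ} (hc : 0 < c) (hs : 0 < s) :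
    (s / c) ^ β * (c / |s - c| ^ (1 / 2 : ℝ)) / s = c ^ (1 - β) * powKernel β c s := by
  rcases eq_or_ne s c with rfl | hsc
  · simp [powKernel]
  have hd : 0 < |s - c| := abs_pos.mpr (sub_ne_zero.mpr hsc)
  rw [powKernel, div_rpow hs.le hc.le, rpow_neg hd.le, rpow_sub hc, rpow_sub hs, rpow_one,
    rpow_one]
  field_simp

section Integrands

variable {β c : ℝ}

theorem integrableOn_abs_sub_integrand_and_integral_le (hβ0 : 0 < β) (hβ : β ≤ 1 / 2)
    (hc0 : 0 < c) (hc1 : c < 1) :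
    IntegrableOn (fun s => (s / c) ^ β * (c / |s - c| ^ (1 / 2 : ℝ)) / s) (Ioo 0 1) ∧
      ∫ s in Ioo 0 1, (s / c) ^ β * (c / |s - c| ^ (1 / 2 : ℝ)) / s
        ≤ (8 + 2 / β) * c ^ (1 / 2 : ℝ) * (1 + |log c|) := by
  obtain ⟨hint, hle⟩ := powKernel_unitInterval hβ0 hβ hc0 hc1
  have eq_on : EqOn (fun s => c ^ (1 - β) * powKernel β c s)
      (fun s => (s / c) ^ β * (c / |s - c| ^ (1 / 2 : ℝ)) / s) (Ioo 0 1) := fun s hs =>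
    (abs_sub_integrand_eq_mul_powKernel hc0 hs.1).symm
  rw [intervalIntegrable_iff_integrableOn_Ioo_of_le zero_le_one] at hint
  rw [integral_of_le zero_le_one, integral_Ioc_eq_integral_Ioo] at hle
  refine ⟨IntegrableOn.congr_fun (hint.const_mul _) eq_on measurableSet_Ioo, ?_⟩
  rw [← setIntegral_congr_fun measurableSet_Ioo eq_on, MeasureTheory.integral_const_mul]
  have hpow : c ^ (1 - β) * c ^ (β - 1 / 2) = c ^ (1 / 2 : ℝ) := by
    rw [← rpow_add hc0]; ring_nf
  have h4 : 4 ≤ 2 / β := by rw [le_div_iff₀ hβ0]; linarith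
  calc c ^ (1 - β) * ∫ s in Ioo 0 1, powKernel β c s
      ≤ c ^ (1 - β) * (c ^ (β - 1 / 2) * (2 / β + 8 + 2 * |log c|)) :=
        mul_le_mul_of_nonneg_left hle (rpow_nonneg hc0.le _)
    _ = c ^ (1 / 2 : ℝ) * (2 / β + 8 + 2 * |log c|) := by rw [← mul_assoc, hpow]
    _ ≤ (8 + 2 / β) * c ^ (1 / 2 : ℝ) * (1 + |log c|) := by
        nlinarith [mul_nonneg (rpow_nonneg hc0.le (1 / 2 : ℝ)) (abs_nonneg (log c))]

theorem add_integrand_ae_le_abs_sub_integrand (hc : 0 < c) :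
    (fun s => (s / c) ^ β * (c / (s + c) ^ (1 / 2 : ℝ)) / s)
      ≤ᵐ[volume.restrict (Ioo 0 1)] fun s => (s / c) ^ β * (c / |s - c| ^ (1 / 2 : ℝ)) / s := by
  have off_diagonal : ∀ᵐ s ∂volume.restrict (Ioo 0 1), s ≠ c :=
    ae_restrict_of_ae (volume.ae_ne c)
  filter_upwards [off_diagonal, ae_restrict_mem measurableSet_Ioo] with s hsc hs
  have hd : 0 < |s - c| := abs_pos.mpr (sub_ne_zero.mpr hsc)
  have hle : |s - c| ≤ s + c := abs_le.mpr ⟨by linarith [hs.1], by linarith⟩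
  have := rpow_le_rpow hd.le hle (by norm_num : (0 : ℝ) ≤ 1 / 2)
  have := hs.1
  gcongr

theorem integrableOn_add_integrand_and_integral_le (hβ0 : 0 < β) (hβ : β ≤ 1 / 2)
    (hc0 : 0 < c) (hc1 : c < 1) :
    IntegrableOn (fun s => (s / c) ^ β * (c / (s + c) ^ (1 / 2 : ℝ)) / s) (Ioo 0 1) ∧
      ∫ s in Ioo 0 1, (s / c) ^ β * (c / (s + c) ^ (1 / 2 : ℝ)) / s
        ≤ (8 + 2 / β) * c ^ (1 / 2 : ℝ) * (1 + |log c|) := by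
  obtain ⟨hint, hle⟩ := integrableOn_abs_sub_integrand_and_integral_le hβ0 hβ hc0 hc1
  have nonneg : 0 ≤ᵐ[volume.restrict (Ioo 0 1)]
      fun s => (s / c) ^ β * (c / (s + c) ^ (1 / 2 : ℝ)) / s :=
    ae_restrict_of_forall_mem measurableSet_Ioo fun s hs => by
      have := hs.1
      positivity
  obtain ⟨hint', hle'⟩ := integrableOn_and_setIntegral_le_of_ae_le
    (by fun_prop : Measurable _).aestronglyMeasurable hint nonneg
    (add_integrand_ae_le_abs_sub_integrand hc0)
  exact ⟨hint', hle'.trans hle⟩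

end Integrands

/-- For every `α ∈ [0, 1)` there is `C > 0` such that for all
`s' ∈ (0, 1)`:
`∫₀^1 (s/s')^{(1-α)/2} (s'/|s-s'|^{1/2}) ds/s ≤ C (s')^{1/2} (1 + |log s'|)`, and
likewise with `(s+s')^{1/2}` in place of `|s-s'|^{1/2}` (both integrands being
integrable on `(0,1)`). -/
theorem stmt_10 (α : ℝ) (hα : α ∈ Set.Ico (0 : ℝ) 1) :
    ∃ C > (0 : ℝ), ∀ s' ∈ Set.Ioo (0 : ℝ) 1,
      (IntegrableOn
          (fun s : ℝ => (s / s') ^ ((1 - α)/2) * (s' / |s - s'| ^ ((1 : ℝ)/2)) / s)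
          (Set.Ioo 0 1) ∧
        (∫ s in Set.Ioo (0 : ℝ) 1,
            (s / s') ^ ((1 - α)/2) * (s' / |s - s'| ^ ((1 : ℝ)/2)) / s)
          ≤ C * s' ^ ((1 : ℝ)/2) * (1 + |Real.log s'|)) ∧
      (IntegrableOn
          (fun s : ℝ => (s / s') ^ ((1 - α)/2) * (s' / (s + s') ^ ((1 : ℝ)/2)) / s)
          (Set.Ioo 0 1) ∧
        (∫ s in Set.Ioo (0 : ℝ) 1,
            (s / s') ^ ((1 - α)/2) * (s' / (s + s') ^ ((1 : ℝ)/2)) / s)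
          ≤ C * s' ^ ((1 : ℝ)/2) * (1 + |Real.log s'|)) := by
  obtain ⟨hα0, hα1⟩ := hα
  have hβ0 : 0 < (1 - α) / 2 := by linarith
  have hβ : (1 - α) / 2 ≤ 1 / 2 := by linarith
  refine ⟨8 + 2 / ((1 - α) / 2), by positivity, fun s' hs' => ?_⟩
  exact ⟨integrableOn_abs_sub_integrand_and_integral_le hβ0 hβ hs'.1 hs'.2,
    integrableOn_add_integrand_and_integral_le hβ0 hβ hs'.1 hs'.2⟩
end
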